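/- arXiv:1510.00971 — 8 statements merged into one kernel-verified Lean document; each statement's English description precedes it below -/
import Mathlib

section
/- (Floquet theorem.) Let n ≥ 1 and let A : ℝ → Mat_{n×n}(ℂ) be continuous and 1-periodic, i.e. A(t+1) = A(t) for all t. Let X : ℝ → Mat_{n×n}(ℂ) be differentiable with X'(t) = A(t)·X(t) for all t and X(0) = I (the fundamental matrix solution). Then there exist a constant n×n complex matrix C and a 1-periodic function P : ℝ → Mat_{n×n}(ℂ) (P(t+1) = P(t) for all t) such that X(t) = P(t)·exp(t•C) for all t ∈ ℝ, where exp denotes the matrix exponential. In particular the monodromy matrix M := X(1) satisfies M = exp(C). -/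
set_option maxHeartbeats 1000000
set_option synthInstance.maxHeartbeats 400000

section Helpers

open NormedSpace Set Polynomial

theorem isUnit_joined {𝔸 : Type*} [NormedCommRing 𝔸] [NormedAlgebra ℂ 𝔸]
    [FiniteDimensional ℂ 𝔸] {y : 𝔸} (hy : IsUnit y) :
    JoinedIn {a : 𝔸 | IsUnit a} 1 y := by
  classical
  set d := Module.finrank ℂ 𝔸 with hd
  let b := Module.finBasis ℂ 𝔸
  let F : 𝔸 →ₐ[ℂ] Matrix (Fin d) (Fin d) ℂ :=
    (LinearMap.toMatrixAlgEquiv b).toAlgHom.comp (Algebra.lmul ℂ 𝔸)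
  have key1 : ∀ a : 𝔸, (F a).det ≠ 0 → IsUnit a := by
    intro a ha
    have h1 : IsUnit (F a) := by
      rw [Matrix.isUnit_iff_isUnit_det, isUnit_iff_ne_zero]; exact ha
    have h2 : IsUnit (Algebra.lmul ℂ 𝔸 a) := by
      have := h1.map (LinearMap.toMatrixAlgEquiv b).symm
      simpa [F] using this
    obtain ⟨u, hu⟩ := h2
    have h3 : a * ((↑u⁻¹ : Module.End ℂ 𝔸) 1) = 1 := by
      have := congrArg (fun f : Module.End ℂ 𝔸 => f ((↑u⁻¹ : Module.End ℂ 𝔸) 1))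
        (hu.symm ▸ rfl : (↑u : Module.End ℂ 𝔸) = Algebra.lmul ℂ 𝔸 a)
      calc a * ((↑u⁻¹ : Module.End ℂ 𝔸) 1)
          = (Algebra.lmul ℂ 𝔸 a) ((↑u⁻¹ : Module.End ℂ 𝔸) 1) := rfl
        _ = ((↑u * ↑u⁻¹ : Module.End ℂ 𝔸)) 1 := by rw [hu]; rfl
        _ = 1 := by rw [u.mul_inv]; rfl
    exact IsUnit.of_mul_eq_one _ h3
  have key2 : ∀ a : 𝔸, IsUnit a → (F a).det ≠ 0 := by
    intro a ha
    rw [← isUnit_iff_ne_zero, ← Matrix.isUnit_iff_isUnit_det]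
    exact ha.map F
  -- the path
  set γ : ℂ → 𝔸 := fun z => 1 + z • (y - 1) with hγ
  have hγcont : Continuous γ := continuous_const.add (continuous_id.smul continuous_const)
  have hγ0 : γ 0 = 1 := by simp [hγ]
  have hγ1 : γ 1 = y := by simp [hγ]
  set B : Set ℂ := {z | ¬ IsUnit (γ z)} with hB
  set p : Polynomial ℂ :=
    ((F 1).map Polynomial.C + (X : ℂ[X]) • (F (y - 1)).map Polynomial.C).det with hp
  have heval : ∀ z : ℂ, p.eval z = (F (γ z)).det := by
    intro z
    have h1 := RingHom.map_det (evalRingHom z) ((F 1).map C + (X : ℂ[X]) • (F (y - 1)).map C)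
    have h2 : (evalRingHom z).mapMatrix ((F 1).map C + (X : ℂ[X]) • (F (y - 1)).map C)
        = F (γ z) := by
      conv_rhs => rw [show γ z = 1 + z • (y - 1) from rfl, map_add, map_smul]
      ext i j
      simp only [RingHom.mapMatrix_apply, Matrix.map_apply, Matrix.add_apply, Matrix.smul_apply,
        smul_eq_mul, coe_evalRingHom, eval_add, eval_mul, eval_C, eval_X]
    rw [hp]
    show (evalRingHom z) _ = _
    rw [h1, h2]
  have hpne : p ≠ 0 := by
    intro h
    apply key2 y hy
    have h2 := heval 1
    rw [hγ1, h] at h2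
    simpa using h2.symm
  have hBsub : B ⊆ {z | p.IsRoot z} := by
    intro z hz
    by_contra hroot
    exact hz (key1 _ (by rw [← heval z]; exact hroot))
  have hBc : B.Countable := (Set.Finite.subset (p.finite_setOf_isRoot hpne) hBsub).countable
  have hpc : IsPathConnected Bᶜ :=
    hBc.isPathConnected_compl_of_one_lt_rank (by rw [Complex.rank_real_complex]; norm_num)
  have h0 : (0 : ℂ) ∈ Bᶜ := by simp [hB, hγ0]
  have h1 : (1 : ℂ) ∈ Bᶜ := by simp [hB, hγ1]; exact hy
  have J : JoinedIn (γ '' Bᶜ) (γ 0) (γ 1) :=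
    (hpc.image hγcont).joinedIn _ (mem_image_of_mem _ h0) _ (mem_image_of_mem _ h1)
  rw [hγ0, hγ1] at J
  exact J.mono (by rintro _ ⟨z, hz, rfl⟩; exact not_not.mp hz)

theorem units_exp_surj {𝔸 : Type*} [NormedCommRing 𝔸] [NormedAlgebra ℂ 𝔸]
    [FiniteDimensional ℂ 𝔸] {x : 𝔸} (hx : IsUnit x) : ∃ c : 𝔸, exp c = x := by
  haveI : CompleteSpace 𝔸 := FiniteDimensional.complete ℂ 𝔸
  let +nondep : NormedAlgebra ℚ 𝔸 := .restrictScalars ℚ ℂ 𝔸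
  classical
  set E : Set 𝔸 := Set.range (exp) with hE
  have hinv : ∀ c : 𝔸, exp c * exp (-c) = 1 := fun c => by rw [← exp_add]; simp
  -- `E` is a neighbourhood of `1`
  have hnhds : E ∈ nhds (1 : 𝔸) := by
    have h0 : HasStrictFDerivAt (exp)
        ((ContinuousLinearEquiv.refl ℂ 𝔸 : 𝔸 ≃L[ℂ] 𝔸) : 𝔸 →L[ℂ] 𝔸) 0 := by
      exact (hasStrictFDerivAt_exp_zero (𝕂 := ℂ) (𝔸 := 𝔸))
    have hmap := h0.map_nhds_eq_of_equiv
    rw [exp_zero] at hmap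
    rw [← hmap, Filter.mem_map]
    exact Filter.univ_mem' fun c => Set.mem_range_self c
  -- `E` is open
  have hEopen : IsOpen E := by
    rw [isOpen_iff_mem_nhds]
    rintro a ⟨c, rfl⟩
    have hcont : Continuous fun y : 𝔸 => exp (-c) * y := continuous_const.mul continuous_id
    have h1 : (fun y : 𝔸 => exp (-c) * y) ⁻¹' E ∈ nhds (exp c) := by
      apply hcont.continuousAt.preimage_mem_nhds
      have h2 : exp (-c) * exp c = 1 := by rw [mul_comm]; exact hinv c
      rw [h2]; exact hnhds
    filter_upwards [h1] with y hy
    obtain ⟨d, hd⟩ := hy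
    refine ⟨c + d, ?_⟩
    have h3 : exp c * (exp (-c) * y) = y := by rw [← mul_assoc, hinv c, one_mul]
    rw [exp_add, hd, h3]
  -- the open set covering the units not in `E`
  set V : Set 𝔸 := ⋃ a ∈ {a : 𝔸 | IsUnit a ∧ a ∉ E}, (fun y => Ring.inverse a * y) ⁻¹' E with hV
  have hVopen : IsOpen V :=
    isOpen_biUnion fun a _ => hEopen.preimage (continuous_const.mul continuous_id)
  have hdisj : Disjoint E V := by
    rw [Set.disjoint_left]
    rintro y ⟨c, rfl⟩ hyV
    rw [hV, Set.mem_iUnion₂] at hyV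
    obtain ⟨a, ⟨haU, haE⟩, hy⟩ := hyV
    obtain ⟨dd, hdd⟩ := hy
    apply haE
    have h4 : a * (Ring.inverse a * exp c) = exp c := by
      rw [← mul_assoc, Ring.mul_inverse_cancel a haU, one_mul]
    simp only [] at hdd
    rw [← hdd] at h4
    exact ⟨c + -dd, by rw [exp_add, ← h4, mul_assoc, hinv dd, mul_one]⟩
  have hcover : {a : 𝔸 | IsUnit a} ⊆ E ∪ V := by
    intro a ha
    by_cases haE : a ∈ E
    · exact Or.inl haE
    · refine Or.inr ?_
      rw [hV, Set.mem_iUnion₂]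
      exact ⟨a, ⟨ha, haE⟩, ⟨0, by rw [exp_zero]; exact (Ring.inverse_mul_cancel a ha).symm ▸ rfl⟩⟩
  have hUconn : IsPreconnected {a : 𝔸 | IsUnit a} := by
    have : IsPathConnected {a : 𝔸 | IsUnit a} :=
      ⟨1, isUnit_one, fun {y} hy => isUnit_joined hy⟩
    exact this.isConnected.isPreconnected
  have hsub : {a : 𝔸 | IsUnit a} ⊆ E :=
    hUconn.subset_left_of_subset_union hEopen hVopen hdisj hcover
      ⟨1, isUnit_one, ⟨0, exp_zero ..⟩⟩
  exact hsub hx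

attribute [local instance] Matrix.linftyOpNormedAddCommGroup Matrix.linftyOpNormedRing
  Matrix.linftyOpNormedSpace Matrix.linftyOpNormedAlgebra

theorem matrix_exp_surj {n : ℕ} (M : Matrix (Fin n) (Fin n) ℂ) (hM : IsUnit M) :
    ∃ C : Matrix (Fin n) (Fin n) ℂ, exp C = M := by
  classical
  set S : Subalgebra ℂ (Matrix (Fin n) (Fin n) ℂ) := Algebra.adjoin ℂ {M} with hS
  have hcomm : ∀ a b : ↥S, a * b = b * a := by
    rintro ⟨a, ha⟩ ⟨b, hb⟩
    apply Subtype.ext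
    show a * b = b * a
    rw [hS, Algebra.adjoin_singleton_eq_range_aeval] at ha hb
    obtain ⟨p, hp⟩ := ha
    obtain ⟨q, hq⟩ := hb
    rw [← hp, ← hq]
    exact ((Commute.all p q).map (Polynomial.aeval M)).eq
  letI : NormedCommRing ↥S := { (inferInstance : NormedRing ↥S) with mul_comm := hcomm }
  haveI : FiniteDimensional ℂ ↥S := inferInstance
  let +nondep : NormedAlgebra ℚ ↥S := .restrictScalars ℚ ℂ ↥S
  set m : ↥S := ⟨M, Algebra.self_mem_adjoin_singleton ℂ M⟩ with hm
  have hminj : Function.Injective (LinearMap.mulLeft ℂ m) := by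
    intro u v h
    apply Subtype.ext
    apply hM.mul_left_cancel
    simpa [LinearMap.mulLeft_apply] using congrArg Subtype.val h
  obtain ⟨u, hu⟩ := (LinearMap.injective_iff_surjective.mp hminj) 1
  have hmu : IsUnit m := IsUnit.of_mul_eq_one u (by simpa [LinearMap.mulLeft_apply] using hu)
  obtain ⟨c, hc⟩ := units_exp_surj hmu
  refine ⟨(c : Matrix (Fin n) (Fin n) ℂ), ?_⟩
  have hmap := map_exp (S.val) continuous_subtype_val c
  rw [hc] at hmap
  exact hmap.symm

open NormedSpace Set in
theorem ode_uniq {n : ℕ} (A : ℝ → Matrix (Fin n) (Fin n) ℂ) (hA : Continuous A)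
    (f g : ℝ → Matrix (Fin n) (Fin n) ℂ)
    (hf : ∀ t, HasDerivAt f (A t * f t) t) (hg : ∀ t, HasDerivAt g (A t * g t) t)
    (t₀ : ℝ) (h0 : f t₀ = g t₀) (t : ℝ) : f t = g t := by
  set T : ℝ := |t| + |t₀| + 1 with hT
  have habs : |t| < T := by have := abs_nonneg t₀; rw [hT]; linarith
  have habs0 : |t₀| < T := by have := abs_nonneg t; rw [hT]; linarith
  have htmem : t ∈ Ioo (-T) T := by
    rcases abs_lt.mp habs with ⟨h1, h2⟩; exact ⟨h1, h2⟩
  have ht0mem : t₀ ∈ Ioo (-T) T := by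
    rcases abs_lt.mp habs0 with ⟨h1, h2⟩; exact ⟨h1, h2⟩
  obtain ⟨Cb, hCb⟩ := (isCompact_Icc (a := -T) (b := T)).exists_bound_of_continuousOn
    hA.continuousOn
  set prj : ℝ → ℝ := fun s => max (-T) (min s T) with hprjdef
  have hprjmem : ∀ s, prj s ∈ Icc (-T) T := by
    intro s
    constructor
    · exact le_max_left _ _
    · apply max_le (by linarith [abs_nonneg t, abs_nonneg t₀]) (min_le_right _ _)
  have hprj : ∀ s ∈ Ioo (-T) T, prj s = s := by
    intro s hs
    rw [hprjdef]
    simp only []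
    rw [min_eq_left hs.2.le, max_eq_right hs.1.le]
  set K : NNReal := ⟨max Cb 0, le_max_right _ _⟩ with hK
  set v : ℝ → Matrix (Fin n) (Fin n) ℂ → Matrix (Fin n) (Fin n) ℂ :=
    fun s x => A (prj s) * x with hv
  have hlip : ∀ s, LipschitzOnWith K (v s) univ := by
    intro s
    apply LipschitzWith.lipschitzOnWith
    apply LipschitzWith.of_dist_le_mul
    intro x y
    rw [dist_eq_norm, dist_eq_norm, ← mul_sub]
    calc ‖A (prj s) * (x - y)‖ ≤ ‖A (prj s)‖ * ‖x - y‖ := norm_mul_le _ _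
      _ ≤ (K : ℝ) * ‖x - y‖ := by
          apply mul_le_mul_of_nonneg_right _ (norm_nonneg _)
          exact le_trans (hCb _ (hprjmem s)) (le_max_left _ _)
  have key := ODE_solution_unique_of_mem_Ioo (v := v) (s := fun _ => univ) (K := K) (fun s _ => hlip s)
    ht0mem
    (fun u hu => ⟨by rw [hv]; simp only []; rw [hprj u hu]; exact hf u, trivial⟩)
    (fun u hu => ⟨by rw [hv]; simp only []; rw [hprj u hu]; exact hg u, trivial⟩)
    h0
  exact key htmem


end Helpers


attribute [local instance] Matrix.linftyOpNormedAddCommGroup Matrix.linftyOpNormedRing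
  Matrix.linftyOpNormedSpace Matrix.linftyOpNormedAlgebra

open NormedSpace in
/-- **Floquet theorem**: the fundamental matrix solution `X` of a `1`-periodic
linear system `X' = A(t) X`, `X(0) = I`, factors as `X(t) = P(t) exp(t • C)`
with `P` `1`-periodic and `C` constant; in particular the monodromy matrix
`M = X(1)` equals `exp C`. -/
theorem floquet_theorem (n : ℕ) (hn : 1 ≤ n)
    (A : ℝ → Matrix (Fin n) (Fin n) ℂ) (hA : Continuous A)
    (hAper : ∀ t : ℝ, A (t + 1) = A t)
    (X : ℝ → Matrix (Fin n) (Fin n) ℂ) (hX : Differentiable ℝ X)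
    (hode : ∀ t : ℝ, deriv X t = A t * X t) (hX0 : X 0 = 1) :
    ∃ (C : Matrix (Fin n) (Fin n) ℂ) (P : ℝ → Matrix (Fin n) (Fin n) ℂ),
      (∀ t : ℝ, P (t + 1) = P t) ∧
      (∀ t : ℝ, X t = P t * exp (t • C)) ∧
      X 1 = exp C := by
  have hXd : ∀ t, HasDerivAt X (A t * X t) t := by
    intro t
    exact (hX t).hasDerivAt.congr_deriv (hode t)
  -- invertibility of `X s`
  have hunit : ∀ s : ℝ, IsUnit (X s) := by
    intro s
    have hinj : Function.Injective (LinearMap.mulLeft ℂ (X s)) := by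
      intro V W h
      simp only [LinearMap.mulLeft_apply] at h
      have h2 : X s * (V - W) = 0 := by rw [mul_sub, h, sub_self]
      have h3 : ∀ u, X u * (V - W) = 0 := by
        intro u
        have hfd : ∀ u, HasDerivAt (fun w => X w * (V - W)) (A u * (X u * (V - W))) u := by
          intro u
          have := (hXd u).mul_const (V - W)
          rwa [mul_assoc] at this
        have hgd : ∀ u, HasDerivAt (fun _ : ℝ => (0 : Matrix (Fin n) (Fin n) ℂ))
            (A u * 0) u := by
          intro u; rw [mul_zero]; exact hasDerivAt_const u 0
        exact ode_uniq A hA _ _ hfd hgd s (by simpa using h2) u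
      have h4 := h3 0
      rw [hX0, one_mul] at h4
      exact sub_eq_zero.mp h4
    obtain ⟨V, hV⟩ := (LinearMap.injective_iff_surjective.mp hinj) 1
    simp only [LinearMap.mulLeft_apply] at hV
    exact ⟨⟨X s, V, hV, mul_eq_one_comm.mp hV⟩, rfl⟩
  -- monodromy
  have hmono : ∀ t, X (t + 1) = X t * X 1 := by
    intro t
    apply ode_uniq A hA (fun w => X (w + 1)) (fun w => X w * X 1) ?_ ?_ 0
      (by show X (0 + 1) = X 0 * X 1; rw [zero_add, hX0, one_mul]) t
    · intro u
      have h1 := (hXd (u + 1)).scomp u ((hasDerivAt_id u).add_const 1)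
      simp [hAper u] at h1; exact h1
    · intro u
      have := (hXd u).mul_const (X 1)
      rwa [mul_assoc] at this
  obtain ⟨C, hC⟩ := matrix_exp_surj (X 1) (hunit 1)
  have key : ∀ s u : ℝ, exp (s • C) * exp (u • C) = exp ((s + u) • C) := by
    intro s u
    rw [add_smul]; exact (exp_add_of_commute (((Commute.refl C).smul_left s).smul_right u)).symm
  refine ⟨C, fun t => X t * exp (-(t • C)), ?_, ?_, hC.symm⟩
  · intro t
    show X (t + 1) * exp (-((t + 1) • C)) = X t * exp (-(t • C))
    have h1 : -((t + 1) • C) = ((-1 : ℝ) • C) + ((-t : ℝ) • C) := by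
      rw [← add_smul, ← neg_smul]; ring_nf
    have h2 : exp (-((t + 1) • C)) = exp ((-1 : ℝ) • C) * exp ((-t : ℝ) • C) := by
      rw [h1]; exact exp_add_of_commute (((Commute.refl C).smul_left (-1 : ℝ)).smul_right (-t : ℝ))
    have h4 : exp C * exp ((-1 : ℝ) • C) = 1 := by
      have h5 := key 1 (-1)
      rw [one_smul] at h5
      rw [h5, show ((1 : ℝ) + -1) = 0 by norm_num, zero_smul, exp_zero]
    have h6 : -(t • C) = (-t : ℝ) • C := (neg_smul t C).symm
    rw [hmono t, h2, ← hC, h6, mul_assoc, ← mul_assoc (exp C), h4, one_mul]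
  · intro t
    show X t = X t * exp (-(t • C)) * exp (t • C)
    have h7 := key (-t) t
    rw [show -t + t = 0 by ring, zero_smul, exp_zero] at h7
    rw [show -(t • C) = (-t : ℝ) • C from (neg_smul t C).symm, mul_assoc, h7, mul_one]
end

section
/- Every invertible complex matrix has a matrix logarithm: for every n ≥ 1 and every M ∈ Mat_{n×n}(ℂ) with M invertible (IsUnit M), there exists C ∈ Mat_{n×n}(ℂ) such that exp(C) = M, where exp denotes the matrix exponential over ℂ. -/
open Polynomial Finset Matrix


noncomputable def Lp (n : ℕ) : Polynomial ℂ :=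
  ∑ j ∈ Finset.Ico 1 n, C ((-1 : ℂ)^(j+1) / (j : ℂ)) * X ^ j

noncomputable def Pp (n : ℕ) : Polynomial ℂ :=
  ∑ m ∈ Finset.range n, C ((m.factorial : ℂ))⁻¹ * (Lp n) ^ m

lemma X_dvd_Lp (n : ℕ) : X ∣ Lp n := by
  refine Finset.dvd_sum fun j hj => ?_
  have hj1 : j ≠ 0 := by simp only [Finset.mem_Ico] at hj; omega
  exact Dvd.dvd.mul_left (dvd_pow_self X hj1) _

lemma derivative_Lp (n : ℕ) :
    derivative (Lp n) = ∑ i ∈ Finset.range (n-1), (-X) ^ i := by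
  rw [Lp, derivative_sum]
  rw [Finset.sum_Ico_eq_sum_range]
  refine Finset.sum_congr rfl fun i _hi => ?_
  rw [derivative_C_mul_X_pow]
  have hne : ((1 + i : ℕ) : ℂ) ≠ 0 := Nat.cast_ne_zero.mpr (by omega)
  have h1 : ((-1 : ℂ))^(1 + i + 1) / ((1 + i : ℕ) : ℂ) * ((1 + i : ℕ) : ℂ) = (-1 : ℂ)^i := by
    rw [div_mul_cancel₀ _ hne]
    rw [pow_add, pow_add]
    ring
  rw [h1]
  rw [show 1 + i - 1 = i from by omega]
  rw [neg_pow (X : ℂ[X]) i, _root_.map_pow, _root_.map_neg, _root_.map_one]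

lemma one_add_X_mul_derivative_Lp (n : ℕ) :
    (1 + X) * derivative (Lp n) = 1 - (-X) ^ (n - 1) := by
  rw [derivative_Lp, mul_comm]
  have := geom_sum_mul (-X : ℂ[X]) (n - 1)
  have h2 : ((-X : ℂ[X]) - 1) = -(1 + X) := by ring
  rw [h2] at this
  have := congrArg (fun p => -p) this
  simp only [neg_neg, mul_neg, neg_sub] at this
  exact this

lemma derivative_Pp (n : ℕ) (hn : 1 ≤ n) :
    derivative (Pp n) =
      derivative (Lp n) * ∑ m ∈ Finset.range (n-1), C ((m.factorial : ℂ))⁻¹ * (Lp n) ^ m := by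
  rw [Pp, derivative_sum]
  rw [Finset.mul_sum]
  rw [show n = (n-1) + 1 from by omega, Finset.sum_range_succ']
  simp only [derivative_C_mul, derivative_pow, pow_zero, derivative_one, mul_zero, add_zero,
    Nat.cast_add, Nat.cast_one]
  refine Finset.sum_congr rfl fun i _hi => ?_
  have : ((i+1).factorial : ℂ)⁻¹ * ((i:ℂ) + 1) = ((i.factorial : ℂ))⁻¹ := by
    rw [Nat.factorial_succ]
    push_cast
    rw [mul_inv]
    have h1 : ((i:ℂ) + 1) ≠ 0 := Nat.cast_add_one_ne_zero i
    rw [mul_comm (((i:ℂ)+1)⁻¹) (((i.factorial :ℂ))⁻¹), mul_assoc,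
      inv_mul_cancel₀ h1, mul_one]
  calc C ((i+1).factorial : ℂ)⁻¹ • (C ((i:ℂ) + 1) * Lp n ^ (i + 1 - 1) * derivative (Lp n))
      = C (((i+1).factorial : ℂ)⁻¹ * ((i:ℂ)+1)) * (Lp n ^ i * derivative (Lp n)) := by
        rw [smul_eq_mul, _root_.map_mul, Nat.add_sub_cancel]; ring
    _ = derivative (Lp n) * (C ((i.factorial : ℂ))⁻¹ * Lp n ^ i) := by rw [this]; ring

lemma X_pow_dvd_rel (n : ℕ) (hn : 1 ≤ n) :
    X ^ (n-1) ∣ (1 + X) * derivative (Pp n) - Pp n := by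
  set S : ℂ[X] := ∑ m ∈ Finset.range (n-1), C ((m.factorial : ℂ))⁻¹ * (Lp n) ^ m with hS
  have hP : Pp n = S + C (((n-1).factorial : ℂ))⁻¹ * (Lp n) ^ (n-1) := by
    rw [Pp, show Finset.range n = Finset.range ((n-1)+1) from by congr 1; omega,
      Finset.sum_range_succ]
  have h1 : (1 + X) * derivative (Pp n) = (1 - (-X) ^ (n-1)) * S := by
    rw [derivative_Pp n hn, ← mul_assoc, one_add_X_mul_derivative_Lp, ← hS]
  have h2 : (1 + X) * derivative (Pp n) - Pp n
      = -((-X) ^ (n-1) * S) - C (((n-1).factorial : ℂ))⁻¹ * (Lp n) ^ (n-1) := by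
    rw [h1, hP]; ring
  rw [h2]
  have d1 : X ^ (n-1) ∣ (-X : ℂ[X]) ^ (n-1) := by
    rw [neg_pow]; exact Dvd.dvd.mul_left dvd_rfl _
  have d2 : X ^ (n-1) ∣ (Lp n) ^ (n-1) := pow_dvd_pow_of_dvd (X_dvd_Lp n) _
  exact dvd_sub (dvd_neg.mpr (d1.mul_right _)) (d2.mul_left _)

lemma eval_zero_Lp (n : ℕ) : (Lp n).eval 0 = 0 := by
  rw [Lp]
  simp only [eval_finset_sum, eval_mul, eval_C, eval_pow, eval_X]
  refine Finset.sum_eq_zero fun j hj => ?_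
  have : j ≠ 0 := by simp only [Finset.mem_Ico] at hj; omega
  rw [zero_pow this, mul_zero]

lemma coeff_zero_Pp (n : ℕ) (hn : 1 ≤ n) : (Pp n).coeff 0 = 1 := by
  rw [coeff_zero_eq_eval_zero, Pp]
  simp only [eval_finset_sum, eval_mul, eval_C, eval_pow, eval_zero_Lp]
  rw [Finset.sum_eq_single 0]
  · simp
  · intro m _ hm; rw [zero_pow hm, mul_zero]
  · intro h; exact absurd (Finset.mem_range.mpr (by omega)) h

lemma coeff_Pp (n : ℕ) (hn : 1 ≤ n) : ∀ k, k < n →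
    (Pp n).coeff k = if k ≤ 1 then 1 else 0 := by
  have hrec : ∀ k, k < n - 1 →
      (Pp n).coeff (k+1) * ((k:ℂ)+1) + (if k = 0 then 0 else (Pp n).coeff k * (k:ℂ))
        - (Pp n).coeff k = 0 := by
    intro k hk
    have h0 := (X_pow_dvd_iff.mp (X_pow_dvd_rel n hn)) k hk
    rw [coeff_sub, add_mul, one_mul, coeff_add] at h0
    rw [coeff_derivative] at h0
    rcases Nat.eq_zero_or_eq_succ_pred k with hk0 | hk0
    · subst hk0
      rw [mul_coeff_zero, coeff_X_zero, zero_mul] at h0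
      simpa using h0
    · rw [hk0] at h0 ⊢
      rw [coeff_X_mul, coeff_derivative] at h0
      simp only [Nat.succ_ne_zero, if_false]
      rw [← Nat.succ_pred_eq_of_pos (by omega : 0 < k)] at h0
      push_cast at h0 ⊢
      simp only [Nat.pred_succ] at h0
      convert h0 using 3
  intro k
  induction k with
  | zero => intro _; rw [coeff_zero_Pp n hn]; norm_num
  | succ k ih =>
    intro hk1
    have hk : k < n - 1 := by omega
    have hr := hrec k hk
    have ihk := ih (by omega)
    have hne : ((k:ℂ)+1) ≠ 0 := Nat.cast_add_one_ne_zero k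
    rcases Nat.eq_zero_or_pos k with h0 | hpos
    · subst h0
      rw [ihk] at hr
      norm_num at hr ⊢
      linear_combination hr
    · have hkne : k ≠ 0 := by omega
      rw [if_neg hkne, ihk] at hr
      rcases Nat.lt_or_ge k 2 with h2 | h2
      · have hk1' : k = 1 := by omega
        subst hk1'
        norm_num at hr ⊢
        exact hr
      · rw [if_neg (by omega : ¬ k + 1 ≤ 1)]
        rw [if_neg (by omega : ¬ k ≤ 1)] at hr
        have h3 : (Pp n).coeff (k+1) * ((k:ℂ)+1) = 0 := by linear_combination hr
        exact (mul_eq_zero.mp h3).resolve_right hne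

lemma key_dvd (n : ℕ) (hn : 1 ≤ n) : X ^ n ∣ Pp n - (1 + X) := by
  refine X_pow_dvd_iff.mpr fun d hd => ?_
  rw [coeff_sub, coeff_add, coeff_one, coeff_X, coeff_Pp n hn d hd]
  rcases Nat.eq_zero_or_pos d with h0 | hpos
  · subst h0; norm_num
  · rcases Nat.lt_or_ge d 2 with h2 | h2
    · have : d = 1 := by omega
      subst this; norm_num
    · rw [if_neg (by omega), if_neg (by omega), if_neg (by omega)]
      norm_num


variable {n : ℕ}

/-- `A ↦ A *ᵥ v` as a linear map. -/
noncomputable def mulVecL (v : Fin n → ℂ) : Matrix (Fin n) (Fin n) ℂ →ₗ[ℂ] (Fin n → ℂ) where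
  toFun A := A *ᵥ v
  map_add' A B := Matrix.add_mulVec A B v
  map_smul' c A := Matrix.smul_mulVec c A v

lemma exp_mulVec (A : Matrix (Fin n) (Fin n) ℂ) (v : Fin n → ℂ) :
    NormedSpace.exp A *ᵥ v = ∑' m : ℕ, ((m.factorial : ℂ))⁻¹ • (A ^ m *ᵥ v) := by
  letI : SeminormedRing (Matrix (Fin n) (Fin n) ℂ) := Matrix.linftyOpSemiNormedRing
  letI : NormedRing (Matrix (Fin n) (Fin n) ℂ) := Matrix.linftyOpNormedRing
  letI : NormedAlgebra ℂ (Matrix (Fin n) (Fin n) ℂ) := Matrix.linftyOpNormedAlgebra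
  have hs : Summable fun m : ℕ => ((m.factorial : ℂ))⁻¹ • A ^ m :=
    NormedSpace.expSeries_summable' (𝕂 := ℂ) A
  have hT : Continuous (mulVecL (n := n) v) := (mulVecL v).continuous_of_finiteDimensional
  have := (mulVecL (n := n) v).toContinuousLinearMap.map_tsum hs
  rw [NormedSpace.exp_eq_tsum ℂ]
  simpa [mulVecL] using this

lemma exp_mulVec_congr {A B : Matrix (Fin n) (Fin n) ℂ} {v : Fin n → ℂ}
    (h : ∀ m : ℕ, A ^ m *ᵥ v = B ^ m *ᵥ v) :
    NormedSpace.exp A *ᵥ v = NormedSpace.exp B *ᵥ v := by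
  rw [exp_mulVec, exp_mulVec]
  exact tsum_congr fun m => by rw [h m]


lemma exp_smul_one (c : ℂ) :
    NormedSpace.exp (c • (1 : Matrix (Fin n) (Fin n) ℂ)) = Complex.exp c • 1 := by
  letI : SeminormedRing (Matrix (Fin n) (Fin n) ℂ) := Matrix.linftyOpSemiNormedRing
  letI : NormedRing (Matrix (Fin n) (Fin n) ℂ) := Matrix.linftyOpNormedRing
  letI : NormedAlgebra ℂ (Matrix (Fin n) (Fin n) ℂ) := Matrix.linftyOpNormedAlgebra
  rw [← Algebra.algebraMap_eq_smul_one]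
  exact (NormedSpace.algebraMap_exp_comm (𝕂 := ℂ) c).symm.trans
    (by rw [← Complex.exp_eq_exp_ℂ, Algebra.algebraMap_eq_smul_one])

lemma exp_Cmu (hn : 1 ≤ n) (M : Matrix (Fin n) (Fin n) ℂ) (μ : ℂ) (hμ : μ ≠ 0)
    (x : Fin n → ℂ) (hx : (M - μ • 1) ^ n *ᵥ x = 0) :
    NormedSpace.exp ((Complex.log μ) • (1 : Matrix (Fin n) (Fin n) ℂ)
      + Polynomial.aeval (μ⁻¹ • (M - μ • 1)) (Lp n)) *ᵥ x = M *ᵥ x := by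
  set ν : Matrix (Fin n) (Fin n) ℂ := μ⁻¹ • (M - μ • 1) with hνdef
  set Lν : Matrix (Fin n) (Fin n) ℂ := Polynomial.aeval ν (Lp n) with hLνdef
  have hν : ν ^ n *ᵥ x = 0 := by
    rw [hνdef, _root_.smul_pow, smul_mulVec, hx, smul_zero]
  -- powers of ν beyond n kill x
  have hνm : ∀ m : ℕ, n ≤ m → ν ^ m *ᵥ x = 0 := by
    intro m hm
    rw [show m = (m - n) + n from by omega, pow_add, ← mulVec_mulVec, hν, mulVec_zero]
  -- Lν^m kills x for m ≥ n
  obtain ⟨h, hh⟩ := X_dvd_Lp n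
  have haec : ∀ p q : Polynomial ℂ, Commute (Polynomial.aeval ν p) (Polynomial.aeval ν q) :=
    fun p q => (Commute.all p q).map _
  have hcomm : Commute ν (Polynomial.aeval ν h) := by
    have := haec Polynomial.X h
    rwa [Polynomial.aeval_X] at this
  have hLν_eq : Lν = Polynomial.aeval ν h * ν := by
    rw [hLνdef, hh, _root_.map_mul, Polynomial.aeval_X, hcomm.eq]
  have hLνm : ∀ m : ℕ, n ≤ m → Lν ^ m *ᵥ x = 0 := by
    intro m hm
    rw [hLν_eq, (hcomm.symm.mul_pow m : _), ← mulVec_mulVec, hνm m hm, mulVec_zero]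
  -- exp Lν *ᵥ x = (1 + ν) *ᵥ x
  have hexpL : NormedSpace.exp Lν *ᵥ x = (1 + ν) *ᵥ x := by
    rw [exp_mulVec]
    rw [tsum_eq_sum (s := Finset.range n) (fun m hm => by
      rw [hLνm m (by simpa using hm), smul_zero])]
    have haeval : Polynomial.aeval ν (Pp n) = ∑ m ∈ Finset.range n, ((m.factorial : ℂ))⁻¹ • Lν ^ m := by
      rw [Pp, _root_.map_sum]
      refine Finset.sum_congr rfl fun m _ => ?_
      rw [_root_.map_mul, _root_.map_pow, Polynomial.aeval_C, ← hLνdef, Algebra.smul_def]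
    have hsum : ∑ m ∈ Finset.range n, ((m.factorial : ℂ))⁻¹ • (Lν ^ m *ᵥ x)
        = Polynomial.aeval ν (Pp n) *ᵥ x := by
      rw [haeval]
      rw [show (∑ m ∈ Finset.range n, ((m.factorial : ℂ))⁻¹ • Lν ^ m) *ᵥ x
          = mulVecL x (∑ m ∈ Finset.range n, ((m.factorial : ℂ))⁻¹ • Lν ^ m) from rfl]
      rw [_root_.map_sum]
      refine Finset.sum_congr rfl fun m _ => ?_
      rw [_root_.map_smul]
      rfl
    rw [hsum]
    obtain ⟨g, hg⟩ := key_dvd n hn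
    have : Polynomial.aeval ν (Pp n) = (1 + ν) + Polynomial.aeval ν g * ν ^ n := by
      have h2 : Pp n = (1 + Polynomial.X) + Polynomial.X ^ n * g := by
        rw [← hg]; ring
      have hc3 : ν ^ n * Polynomial.aeval ν g = Polynomial.aeval ν g * ν ^ n := by
        have := (haec (Polynomial.X ^ n) g).eq
        rwa [_root_.map_pow, Polynomial.aeval_X] at this
      rw [h2, _root_.map_add, _root_.map_add, _root_.map_one, Polynomial.aeval_X, _root_.map_mul,
        _root_.map_pow, Polynomial.aeval_X, hc3]
    rw [this, add_mulVec, ← mulVec_mulVec, hν, mulVec_zero, add_zero]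
  -- assemble
  have hcomm2 : Commute ((Complex.log μ) • (1 : Matrix (Fin n) (Fin n) ℂ)) Lν :=
    (Commute.one_left Lν).smul_left _
  rw [Matrix.exp_add_of_commute _ _ hcomm2, exp_smul_one, Complex.exp_log hμ]
  have hMν : μ • ((1 : Matrix (Fin n) (Fin n) ℂ) + ν) = M := by
    rw [hνdef, smul_add, smul_smul, mul_inv_cancel₀ hμ, one_smul]
    abel
  rw [smul_mul_assoc, one_mul, smul_mulVec, hexpL, ← smul_mulVec, hMν]

set_option maxHeartbeats 2000000 in
/-- Every invertible complex matrix has a matrix logarithm: if `M` is an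
invertible `n × n` complex matrix, then `M = exp C` for some complex matrix `C`. -/
theorem exists_matrix_log (n : ℕ) (hn : 1 ≤ n) (M : Matrix (Fin n) (Fin n) ℂ)
    (hM : IsUnit M) :
    ∃ C : Matrix (Fin n) (Fin n) ℂ, NormedSpace.exp C = M := by
  classical
  set φ : Module.End ℂ (Fin n → ℂ) := Matrix.toLinAlgEquiv' M with hφ
  -- membership in generalized eigenspaces translates to matrix equations
  have hconv : ∀ (μ : ℂ) (x : Fin n → ℂ), x ∈ φ.genEigenspace μ (n : ℕ) →
      (M - μ • 1) ^ n *ᵥ x = 0 := by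
    intro μ x hx
    rw [Module.End.mem_genEigenspace_nat, LinearMap.mem_ker] at hx
    have heq : (φ - μ • 1) ^ n = Matrix.toLinAlgEquiv' ((M - μ • 1) ^ n) := by
      rw [_root_.map_pow, _root_.map_sub, _root_.map_smul, _root_.map_one]
    rw [heq, Matrix.toLinAlgEquiv'_apply] at hx
    exact hx
  -- the finite set of eigenvalues
  obtain ⟨s, hs⟩ : ∃ s : Finset ℂ, ∀ μ, φ.HasEigenvalue μ → μ ∈ s :=
    ⟨(Module.End.finite_hasEigenvalue φ).toFinset,
      fun μ h => (Module.End.finite_hasEigenvalue φ).mem_toFinset.mpr h⟩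
  -- the polynomial interpolation data
  set F : ℂ → Polynomial ℂ :=
    fun μ => C (Complex.log μ) + (Lp n).comp (C μ⁻¹ * (X - C μ)) with hF
  -- Chinese remainder
  obtain ⟨r, hr⟩ : ∃ r : Polynomial ℂ, ∀ i : {μ // μ ∈ s},
      r - F i.1 ∈ Ideal.span {(X - C i.1) ^ n} := by
    refine Ideal.exists_forall_sub_mem_ideal
      (I := fun i : {μ // μ ∈ s} => Ideal.span {(X - C i.1) ^ n})
      (fun i j hij => ?_) (fun i => F i.1)
    simp only [Function.onFun]
    rw [Ideal.isCoprime_span_singleton_iff]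
    exact ((Polynomial.pairwise_coprime_X_sub_C Subtype.val_injective) hij).pow
  refine ⟨Polynomial.aeval M r, ?_⟩
  -- it suffices to check on every vector
  suffices hvec : ∀ v : Fin n → ℂ, NormedSpace.exp (Polynomial.aeval M r) *ᵥ v = M *ᵥ v by
    ext i j
    have := hvec (Pi.single j 1)
    rw [mulVec_single, mulVec_single] at this
    simpa using congrFun this i
  intro v
  have hsup := Module.End.iSup_maxGenEigenspace_eq_top (K := ℂ) φ
  have hv : v ∈ ⨆ μ : ℂ, φ.maxGenEigenspace μ := by rw [hsup]; trivial
  refine Submodule.iSup_induction _ (motive := fun w => NormedSpace.exp (Polynomial.aeval M r) *ᵥ w = M *ᵥ w)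
    hv ?_ (by show _ *ᵥ (0 : Fin n → ℂ) = _ *ᵥ (0 : Fin n → ℂ); rw [mulVec_zero, mulVec_zero]) ?_
  swap
  · intro a b ha hb
    rw [mulVec_add, mulVec_add, ha, hb]
  intro μ x hx
  by_cases hx0 : x = 0
  · rw [hx0, mulVec_zero, mulVec_zero]
  -- x is a generalized eigenvector of exponent n
  have hxn : x ∈ φ.genEigenspace μ (n : ℕ) := by
    have h1 := Module.End.genEigenspace_le_genEigenspace_finrank φ μ ⊤ hx
    rwa [Module.finrank_fin_fun] at h1
  have hker : (M - μ • 1) ^ n *ᵥ x = 0 := hconv μ x hxn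
  -- μ is nonzero
  have hμ0 : μ ≠ 0 := by
    rintro rfl
    rw [zero_smul, sub_zero] at hker
    obtain ⟨u, hu⟩ := hM.pow (n := n)
    apply hx0
    calc x = (↑u⁻¹ * M ^ n) *ᵥ x := by rw [← hu, Units.inv_mul, one_mulVec]
    _ = (↑u⁻¹ : Matrix (Fin n) (Fin n) ℂ) *ᵥ (M ^ n *ᵥ x) := (mulVec_mulVec _ _ _).symm
    _ = 0 := by rw [hker, mulVec_zero]
  -- μ is an eigenvalue
  have hμs : μ ∈ s := by
    exact hs μ (Module.End.hasEigenvalue_of_hasGenEigenvalue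
      (k := n) (Submodule.ne_bot_iff _ |>.mpr ⟨x, hxn, hx0⟩))
  -- the local matrix
  set ν : Matrix (Fin n) (Fin n) ℂ := μ⁻¹ • (M - μ • 1) with hν
  have haeX : Polynomial.aeval M (X - C μ) = M - μ • 1 := by
    rw [_root_.map_sub, Polynomial.aeval_X, Polynomial.aeval_C, Algebra.algebraMap_eq_smul_one]
  have hCmu : Polynomial.aeval M (F μ)
      = (Complex.log μ) • (1 : Matrix (Fin n) (Fin n) ℂ) + Polynomial.aeval ν (Lp n) := by
    rw [hF]
    rw [_root_.map_add, Polynomial.aeval_C, Algebra.algebraMap_eq_smul_one, Polynomial.aeval_comp]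
    congr 1
    rw [_root_.map_mul, Polynomial.aeval_C, haeX, ← Algebra.smul_def, hν]
  -- difference is divisible
  obtain ⟨g, hg⟩ := Ideal.mem_span_singleton.mp (hr ⟨μ, hμs⟩)
  have hdiff : Polynomial.aeval M r - (Polynomial.aeval M (F μ)) = Polynomial.aeval M g * (M - μ • 1) ^ n := by
    rw [← _root_.map_sub, hg, mul_comm, _root_.map_mul, _root_.map_pow, haeX]
  have hC0x : ∀ y : Fin n → ℂ, (M - μ • 1) ^ n *ᵥ y = 0 →
      Polynomial.aeval M r *ᵥ y = (Polynomial.aeval M (F μ)) *ᵥ y := by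
    intro y hy
    have h2 : Polynomial.aeval M r *ᵥ y - (Polynomial.aeval M (F μ)) *ᵥ y = 0 := by
      rw [← sub_mulVec, hdiff, ← mulVec_mulVec, hy, mulVec_zero]
    exact sub_eq_zero.mp h2
  -- (Polynomial.aeval M (F μ)) preserves the kernel
  have hCmuinv : ∀ y : Fin n → ℂ, (M - μ • 1) ^ n *ᵥ y = 0 →
      (M - μ • 1) ^ n *ᵥ ((Polynomial.aeval M (F μ)) *ᵥ y) = 0 := by
    intro y hy
    have hc : (M - μ • 1) ^ n * (Polynomial.aeval M (F μ)) = (Polynomial.aeval M (F μ)) * (M - μ • 1) ^ n := by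
      have := ((Commute.all ((X - C μ) ^ n) (F μ)).map (Polynomial.aeval M)).eq
      rwa [_root_.map_pow, haeX] at this
    rw [mulVec_mulVec, hc, ← mulVec_mulVec, hy, mulVec_zero]
  -- powers agree on x
  have hpow : ∀ (m : ℕ) (y : Fin n → ℂ), (M - μ • 1) ^ n *ᵥ y = 0 →
      (Polynomial.aeval M r) ^ m *ᵥ y = (Polynomial.aeval M (F μ)) ^ m *ᵥ y := by
    intro m
    induction m with
    | zero => intro y _; rw [pow_zero, pow_zero]
    | succ m ih =>
      intro y hy
      rw [pow_succ, pow_succ, ← mulVec_mulVec, ← mulVec_mulVec, hC0x y hy]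
      exact ih ((Polynomial.aeval M (F μ)) *ᵥ y) (hCmuinv y hy)
  calc NormedSpace.exp (Polynomial.aeval M r) *ᵥ x
      = NormedSpace.exp (Polynomial.aeval M (F μ)) *ᵥ x := exp_mulVec_congr (fun m => hpow m x hker)
    _ = M *ᵥ x := by rw [hCmu]; exact exp_Cmu hn M μ hμ0 x hker
end

section
/- Let U be a nonempty connected open subset of ℝⁿ and let f : ℝⁿ → ℝ be real analytic on a neighborhood of each point of U (AnalyticOnNhd ℝ f U). If the set {x ∈ U | f(x) = 0} has positive Lebesgue measure, then f vanishes identically on U. -/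
open MeasureTheory Set Filter Topology

private lemma cons_eq_add_smul {n : ℕ} (s : ℝ) (y : Fin n → ℝ) :
    (Fin.cons s y : Fin (n + 1) → ℝ)
      = (Fin.cons 0 y : Fin (n + 1) → ℝ) + s • (Fin.cons 1 0 : Fin (n + 1) → ℝ) := by
  funext i
  refine Fin.cases ?_ (fun j => ?_) i <;> simp

private lemma analyticAt_cons_left {n : ℕ} {f : (Fin (n + 1) → ℝ) → ℝ} {s : ℝ}
    {y : Fin n → ℝ} (hf : AnalyticAt ℝ f (Fin.cons s y)) :
    AnalyticAt ℝ (fun t : ℝ => f (Fin.cons t y)) s := by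
  have hinner : AnalyticAt ℝ
      (fun t : ℝ => (Fin.cons 0 y : Fin (n + 1) → ℝ) + t • (Fin.cons 1 0 : Fin (n + 1) → ℝ)) s :=
    analyticAt_const.add (analyticAt_id.smul analyticAt_const)
  rw [cons_eq_add_smul s y] at hf
  exact (AnalyticAt.comp
    (f := fun t : ℝ => (Fin.cons 0 y : Fin (n + 1) → ℝ) + t • (Fin.cons 1 0 : Fin (n + 1) → ℝ))
    hf hinner).congr
    (by filter_upwards with t; simp [Function.comp, ← cons_eq_add_smul])

private noncomputable def consCLM (n : ℕ) : (Fin n → ℝ) →L[ℝ] (Fin (n + 1) → ℝ) :=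
  ContinuousLinearMap.pi (Fin.cases 0 (fun j => ContinuousLinearMap.proj j))

private lemma consCLM_apply {n : ℕ} (y : Fin n → ℝ) : consCLM n y = Fin.cons 0 y := by
  funext i
  refine Fin.cases ?_ (fun j => ?_) i <;>
    simp [consCLM, ContinuousLinearMap.pi_apply]

private lemma cons_eq_const_add {n : ℕ} (s : ℝ) (y : Fin n → ℝ) :
    (Fin.cons s y : Fin (n + 1) → ℝ)
      = (Fin.cons s 0 : Fin (n + 1) → ℝ) + Fin.cons 0 y := by
  funext i
  refine Fin.cases ?_ (fun j => ?_) i <;> simp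

private lemma analyticAt_cons_right {n : ℕ} {f : (Fin (n + 1) → ℝ) → ℝ} {s : ℝ}
    {y : Fin n → ℝ} (hf : AnalyticAt ℝ f (Fin.cons s y)) :
    AnalyticAt ℝ (fun z : Fin n → ℝ => f (Fin.cons s z)) y := by
  have hinner : AnalyticAt ℝ
      (fun z : Fin n → ℝ => (Fin.cons s 0 : Fin (n + 1) → ℝ) + consCLM n z) y :=
    analyticAt_const.add ((consCLM n).analyticAt y)
  have hval : (Fin.cons s 0 : Fin (n + 1) → ℝ) + consCLM n y = Fin.cons s y := by
    rw [consCLM_apply, ← cons_eq_const_add]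
  rw [← hval] at hf
  exact (AnalyticAt.comp
    (f := fun z : Fin n → ℝ => (Fin.cons s 0 : Fin (n + 1) → ℝ) + consCLM n z)
    hf hinner).congr (by
      filter_upwards with z
      simp [Function.comp, consCLM_apply, ← cons_eq_const_add])

/-- The zero set of a one-dimensional real analytic function which is not identically zero
on a preconnected open set is Lebesgue-null. -/
private lemma oneDim_null {g : ℝ → ℝ} {I : Set ℝ} (hIc : IsPreconnected I)
    (hg : AnalyticOnNhd ℝ g I) (hne : ¬ Set.EqOn g 0 I) :
    volume {s ∈ I | g s = 0} = 0 := by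
  apply measure_null_of_locally_null
  rintro s ⟨hsI, hs0⟩
  rcases (hg s hsI).eventually_eq_zero_or_eventually_ne_zero with h | h
  · exact absurd (hg.eqOn_zero_of_preconnected_of_eventuallyEq_zero hIc hsI h) hne
  · have h' : ∀ᶠ w in 𝓝 s, w ≠ s → g w ≠ 0 := by
      have := eventually_nhdsWithin_iff.mp h
      filter_upwards [this] with w hw hws using hw hws
    refine ⟨{t ∈ I | g t = 0} ∩ {w | w ≠ s → g w ≠ 0}, ?_, ?_⟩
    · exact Filter.inter_mem self_mem_nhdsWithin (mem_nhdsWithin_of_mem_nhds h')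
    · refine measure_mono_null ?_ (measure_singleton s)
      rintro t ⟨⟨htI, ht0⟩, htV⟩
      by_contra hts
      exact htV hts ht0

/-- Key dimension-induction lemma: the set of zeros of an analytic function at which it does
not vanish locally, is Lebesgue-null. -/
private lemma analytic_null_aux :
    ∀ (n : ℕ) (f : (Fin n → ℝ) → ℝ) (U : Set (Fin n → ℝ)),
      IsOpen U → AnalyticOnNhd ℝ f U →
      volume {x ∈ U | f x = 0 ∧ ¬ (∀ᶠ y in 𝓝 x, f y = 0)} = 0 := by
  intro n
  induction n with
  | zero =>
    intro f U hU hf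
    have : {x ∈ U | f x = 0 ∧ ¬ (∀ᶠ y in 𝓝 x, f y = 0)} = ∅ := by
      ext x
      simp only [mem_setOf_eq, mem_empty_iff_false, iff_false, not_and]
      intro hxU hx0
      simp only [not_not]
      exact Filter.Eventually.of_forall fun y => by rw [Subsingleton.elim y x]; exact hx0
    rw [this, measure_empty]
  | succ n ih =>
    intro f U hU hf
    apply measure_null_of_locally_null
    rintro x₀ ⟨hx₀U, hx₀0, hx₀ne⟩
    obtain ⟨r, hr, hBU⟩ := Metric.isOpen_iff.mp hU x₀ hx₀U
    set B := Metric.ball x₀ r with hBdef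
    have hfB : AnalyticOnNhd ℝ f B := fun x hx => hf x (hBU hx)
    set I : Set ℝ := Metric.ball (x₀ 0) r with hIdef
    set B' : Set (Fin n → ℝ) := Metric.ball (fun j => x₀ j.succ) r with hB'def
    have hmem : ∀ (s : ℝ) (y : Fin n → ℝ), (Fin.cons s y : Fin (n + 1) → ℝ) ∈ B ↔
        s ∈ I ∧ y ∈ B' := by
      intro s y
      rw [hBdef, hIdef, hB'def, Metric.mem_ball, Metric.mem_ball, Metric.mem_ball,
        dist_pi_lt_iff hr, dist_pi_lt_iff hr, Fin.forall_fin_succ]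
      simp
    have hBnhds : B ∈ 𝓝 x₀ := Metric.ball_mem_nhds x₀ hr
    by_cases hcase : ∀ s ∈ I, ∀ y ∈ B', f (Fin.cons s y) = 0
    · exfalso
      apply hx₀ne
      filter_upwards [hBnhds] with x hx
      have hx' : (Fin.cons (x 0) (Fin.tail x) : Fin (n + 1) → ℝ) ∈ B := by
        rw [Fin.cons_self_tail]; exact hx
      rw [hmem] at hx'
      have := hcase _ hx'.1 _ hx'.2
      rwa [Fin.cons_self_tail] at this
    · push_neg at hcase
      obtain ⟨s₁, hs₁I, y₁, hy₁B', hfy₁⟩ := hcase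
      -- the function `y ↦ f (s₁, y)` on `B'`
      set g₁ : (Fin n → ℝ) → ℝ := fun y => f (Fin.cons s₁ y) with hg₁def
      have hA2 : AnalyticOnNhd ℝ g₁ B' := fun y hy =>
        analyticAt_cons_right (hfB _ ((hmem s₁ y).2 ⟨hs₁I, hy⟩))
      have hB'conn : IsPreconnected B' := (convex_ball _ _).isPreconnected
      have hIconn : IsPreconnected I := (convex_ball _ _).isPreconnected
      set N : Set (Fin n → ℝ) := {y ∈ B' | g₁ y = 0 ∧ ¬ (∀ᶠ z in 𝓝 y, g₁ z = 0)} with hNdef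
      have hN : volume N = 0 := ih g₁ B' Metric.isOpen_ball hA2
      -- a.e. slice is null
      have hslice : ∀ y ∈ B', y ∉ N → volume {s ∈ I | f (Fin.cons s y) = 0} = 0 := by
        intro y hyB' hyN
        have hA1 : AnalyticOnNhd ℝ (fun s : ℝ => f (Fin.cons s y)) I := fun s hs =>
          analyticAt_cons_left (hfB _ ((hmem s y).2 ⟨hs, hyB'⟩))
        by_cases hEq : Set.EqOn (fun s : ℝ => f (Fin.cons s y)) 0 I
        · exfalso
          apply hyN
          refine ⟨hyB', hEq hs₁I, fun hev => ?_⟩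
          have := hA2.eqOn_zero_of_preconnected_of_eventuallyEq_zero hB'conn hyB' hev
          exact hfy₁ (this hy₁B')
        · exact oneDim_null hIconn hA1 hEq
      -- measurability of the zero set in `B`
      set S : Set (Fin (n + 1) → ℝ) := {x ∈ B | f x = 0} with hSdef
      have hSmeas : MeasurableSet S := by
        have hSeq : S = B ∩ closure S := by
          apply Set.Subset.antisymm
          · exact Set.subset_inter (fun x hx => hx.1) subset_closure
          · rintro x ⟨hxB, hxcl⟩
            refine ⟨hxB, ?_⟩
            have hc : ContinuousAt f x :=
              (hfB x hxB).continuousAt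
            have h1 : f x ∈ closure (f '' S) :=
              hc.continuousWithinAt.mem_closure_image hxcl
            have himg : f '' S ⊆ {0} := by rintro _ ⟨z, hz, rfl⟩; exact hz.2
            have := closure_mono himg h1
            simpa using this
        rw [hSeq]
        exact Metric.isOpen_ball.measurableSet.inter measurableSet_closure
      -- pass to the product space
      set e := MeasurableEquiv.piFinSuccAbove (fun _ : Fin (n + 1) => ℝ) 0 with hedef
      have hesymm : ∀ (s : ℝ) (y : Fin n → ℝ),
          e.symm (s, y) = (Fin.cons s y : Fin (n + 1) → ℝ) := by
        intro s y
        simp [hedef, MeasurableEquiv.piFinSuccAbove, Fin.insertNthEquiv,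
          Fin.insertNth_zero']
      have hep : MeasurePreserving e volume volume :=
        volume_preserving_piFinSuccAbove (fun _ : Fin (n + 1) => ℝ) 0
      set T : Set (ℝ × (Fin n → ℝ)) := e.symm ⁻¹' S with hTdef
      have hTmeas : MeasurableSet T := e.symm.measurable hSmeas
      have hST : volume S = volume T := by
        have hpre : S = e ⁻¹' T := by
          ext x
          simp [hTdef]
        rw [hpre]
        exact hep.measure_preimage hTmeas.nullMeasurableSet
      set T' : Set ((Fin n → ℝ) × ℝ) := Prod.swap ⁻¹' T with hT'def
      have hT'meas : MeasurableSet T' := measurable_swap hTmeas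
      have hTT' : (volume : Measure (ℝ × (Fin n → ℝ))) T
          = (volume : Measure ((Fin n → ℝ) × ℝ)) T' := by
        rw [Measure.volume_eq_prod, Measure.volume_eq_prod]
        exact (Measure.measurePreserving_swap.measure_preimage
          hTmeas.nullMeasurableSet).symm
      have hT'null : (volume : Measure ((Fin n → ℝ) × ℝ)) T' = 0 := by
        rw [Measure.volume_eq_prod]
        rw [Measure.measure_prod_null hT'meas]
        have hNc : Nᶜ ∈ ae (volume : Measure (Fin n → ℝ)) := compl_mem_ae_iff.mpr hN
        filter_upwards [hNc] with y hyN
        simp only [Pi.zero_apply]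
        by_cases hyB' : y ∈ B'
        · have hsec : Prod.mk y ⁻¹' T' = {s ∈ I | f (Fin.cons s y) = 0} := by
            ext s
            simp only [hT'def, hTdef, Set.mem_preimage, Prod.swap_prod_mk, hesymm s y,
              hSdef, Set.mem_setOf_eq, Set.mem_sep_iff]
            rw [hmem]
            tauto
          rw [hsec]
          exact hslice y hyB' hyN
        · have hsec : Prod.mk y ⁻¹' T' = ∅ := by
            ext s
            simp only [hT'def, hTdef, Set.mem_preimage, Prod.swap_prod_mk, hesymm s y,
              hSdef, Set.mem_setOf_eq, Set.mem_empty_iff_false, iff_false]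
            intro hmem'
            exact hyB' ((hmem s y).1 hmem'.1).2
          rw [hsec, measure_empty]
      have hSnull : volume S = 0 := by rw [hST, hTT', hT'null]
      refine ⟨{x ∈ U | f x = 0 ∧ ¬ (∀ᶠ y in 𝓝 x, f y = 0)} ∩ B, ?_, ?_⟩
      · exact Filter.inter_mem self_mem_nhdsWithin (mem_nhdsWithin_of_mem_nhds hBnhds)
      · refine measure_mono_null ?_ hSnull
        rintro x ⟨⟨hxU, hx0, _⟩, hxB⟩
        exact ⟨hxB, hx0⟩

/-- A real analytic function on a nonempty connected open set `U ⊆ ℝⁿ` whose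
zero set in `U` has positive Lebesgue measure vanishes identically on `U`. -/
theorem analytic_eq_zero_of_pos_measure_zero_set
    (n : ℕ) (U : Set (Fin n → ℝ)) (hU : IsOpen U) (hUconn : IsConnected U)
    (f : (Fin n → ℝ) → ℝ) (hf : AnalyticOnNhd ℝ f U)
    (hpos : 0 < volume {x ∈ U | f x = 0}) :
    ∀ x ∈ U, f x = 0 := by
  by_contra h
  push_neg at h
  obtain ⟨x₁, hx₁U, hx₁⟩ := h
  have hkey : ∀ x ∈ U, f x = 0 → ¬ (∀ᶠ y in 𝓝 x, f y = 0) := by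
    intro x hxU _ hev
    have := hf.eqOn_zero_of_preconnected_of_eventuallyEq_zero hUconn.isPreconnected hxU hev
    exact hx₁ (this hx₁U)
  have : {x ∈ U | f x = 0} = {x ∈ U | f x = 0 ∧ ¬ (∀ᶠ y in 𝓝 x, f y = 0)} := by
    ext x
    simp only [Set.mem_setOf_eq, Set.mem_sep_iff]
    exact ⟨fun ⟨h1, h2⟩ => ⟨h1, h2, hkey x h1 h2⟩, fun ⟨h1, h2, _⟩ => ⟨h1, h2⟩⟩
  rw [this, analytic_null_aux n f U hU hf] at hpos
  exact lt_irrefl 0 hpos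
end

section
/- (Key estimate in Thomas's proof of absence of flat bands.) For every real number a, every integer m, and every real number r ≥ 0, one has |((π + 2πm) + 2ai)² + r| ≥ 4π|a|, where |·| denotes the complex absolute value. That is, the symbol (k₁ + 2πm)² + r of the Laplacian at the complex quasimomentum k = (π + 2ai, 0, …, 0) is bounded below in absolute value by 4π|a| uniformly over all Fourier modes. -/
open Real

/-- Key estimate in Thomas's proof: for the complex quasimomentum component
`π + 2πm + 2ai` and any `r ≥ 0`, the symbol `((π + 2πm) + 2ai)² + r` is bounded
below in absolute value by `4π|a|`. -/
theorem thomas_symbol_lower_bound (a : ℝ) (m : ℤ) (r : ℝ) (hr : 0 ≤ r) :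
    4 * π * |a| ≤
      ‖(((π + 2 * π * m : ℝ) : ℂ) + 2 * a * Complex.I) ^ 2 + (r : ℂ)‖ := by
  have him : ((((π + 2 * π * m : ℝ) : ℂ) + 2 * a * Complex.I) ^ 2 + (r : ℂ)).im
      = 4 * a * (π + 2 * π * m) := by
    simp [Complex.add_im, sq, Complex.mul_im]
    ring
  calc 4 * π * |a| ≤ |4 * a * (π + 2 * π * m)| := by
        rw [abs_mul, abs_mul]
        have h1 : (1 : ℝ) ≤ |(1 + 2 * (m : ℝ))| := by
          have : (1 : ℝ) ≤ |(2 * m + 1 : ℤ)| := by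
            exact_mod_cast Int.one_le_abs (by omega)
          push_cast at this
          convert this using 2
          exacts [rfl, rfl, by ring]
        have h2 : |π + 2 * π * (m : ℝ)| = π * |1 + 2 * (m : ℝ)| := by
          rw [show π + 2 * π * (m : ℝ) = π * (1 + 2 * m) by ring, abs_mul,
            abs_of_pos Real.pi_pos]
        rw [h2]
        have : π * 1 ≤ π * |1 + 2 * (m : ℝ)| :=
          mul_le_mul_of_nonneg_left h1 Real.pi_pos.le
        rw [show |(4:ℝ)| = 4 from by norm_num]
        nlinarith [abs_nonneg a, Real.pi_pos]
    _ ≤ ‖_‖ := him ▸ Complex.abs_im_le_norm _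
end

section
/- (Thomas's argument in Fourier representation.) Fix n ≥ 1 and a ∈ ℝ, and define the symbol m : (Fin n → ℤ) → ℂ by m(γ) = ((π + 2πγ₀) + 2ai)² + Σ_{j≠0} (2πγ_j)², corresponding to the complex quasimomentum k = (π + 2ai, 0, …, 0). Let T be a bounded linear operator on the Hilbert space ℓ²((Fin n → ℤ), ℂ) with operator norm ‖T‖ < 4π|a| (T represents, in the Fourier basis, multiplication by a periodic potential V with ‖V‖_∞ ≤ ‖T‖). If u ∈ ℓ²((Fin n → ℤ), ℂ) satisfies m(γ)·u(γ) = (Tu)(γ) for every γ, then u = 0. In particular, for |a| > ‖T‖/(4π) the equation Δ(k)u = Vu has no nontrivial solution, so the Bloch variety of −Δ + V has no flat component λ = const. -/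
open Real

/-- **Thomas's argument** in the Fourier representation: with the symbol
`m(γ) = ((π + 2πγ₀) + 2ai)² + Σ_{j≠0} (2πγ_j)²` of the twisted Laplacian at
the complex quasimomentum `k = (π + 2ai, 0, …, 0)`, if `T` is a bounded
operator on `ℓ²(ℤⁿ)` with `‖T‖ < 4π|a|` and `u ∈ ℓ²(ℤⁿ)` satisfies
`m(γ) u(γ) = (Tu)(γ)` for all `γ`, then `u = 0`. Hence the Bloch variety of
`−Δ + V` has no flat component. -/
theorem thomas_no_flat_band (n : ℕ) (hn : 0 < n) (a : ℝ)
    (T : lp (fun _ : (Fin n → ℤ) => ℂ) 2 →L[ℂ] lp (fun _ : (Fin n → ℤ) => ℂ) 2)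
    (hT : ‖T‖ < 4 * π * |a|)
    (u : lp (fun _ : (Fin n → ℤ) => ℂ) 2)
    (hu : ∀ γ : Fin n → ℤ,
      ((((π + 2 * π * (γ ⟨0, hn⟩ : ℝ)) : ℂ) + 2 * a * Complex.I) ^ 2 +
          ((∑ j ∈ Finset.univ.erase (⟨0, hn⟩ : Fin n),
            (2 * π * (γ j : ℝ)) ^ 2 : ℝ) : ℂ)) * u γ = (T u) γ) :
    u = 0 := by
  have ha : a ≠ 0 := by
    rintro rfl
    rw [abs_zero, mul_zero] at hT
    exact absurd hT (not_lt.2 (norm_nonneg T))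
  set c : ℝ := 4 * π * |a| with hc
  have hcpos : 0 < c := by
    have : 0 < |a| := abs_pos.2 ha
    positivity
  -- pointwise bound: c * ‖u γ‖ ≤ ‖(T u) γ‖
  have key : ∀ γ : Fin n → ℤ, c * ‖u γ‖ ≤ ‖(T u) γ‖ := by
    intro γ
    rw [← hu γ, norm_mul]
    refine mul_le_mul_of_nonneg_right ?_ (norm_nonneg _)
    set b : ℝ := π + 2 * π * (γ ⟨0, hn⟩ : ℝ) with hb
    have hcast : ((π : ℂ) + 2 * (π : ℂ) * (((γ ⟨0, hn⟩ : ℤ) : ℝ) : ℂ)) = ((b : ℝ) : ℂ) := by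
      push_cast [hb]; ring
    rw [hcast]
    set s : ℝ := ∑ j ∈ Finset.univ.erase (⟨0, hn⟩ : Fin n), (2 * π * (γ j : ℝ)) ^ 2
    have him : (((b : ℂ) + 2 * a * Complex.I) ^ 2 + (s : ℂ)).im = 4 * a * b := by
      simp [Complex.add_im, Complex.mul_im, Complex.mul_re, sq]
      ring
    have hbge : π ≤ |b| := by
      have : b = π * ((1 + 2 * (γ ⟨0, hn⟩) : ℤ) : ℝ) := by push_cast [hb]; ring
      rw [this, abs_mul, abs_of_pos pi_pos]
      have h1 : (1 : ℝ) ≤ |((1 + 2 * (γ ⟨0, hn⟩) : ℤ) : ℝ)| := by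
        rw [← Int.cast_abs]
        exact_mod_cast Int.one_le_abs (by omega)
      nlinarith [pi_pos]
    calc c = 4 * |a| * π := by rw [hc]; ring
      _ ≤ 4 * |a| * |b| := by
          have : 0 ≤ 4 * |a| := by positivity
          nlinarith
      _ = |4 * a * b| := by rw [abs_mul, abs_mul]; simp [abs_of_nonneg]
      _ = |(((b : ℂ) + 2 * a * Complex.I) ^ 2 + (s : ℂ)).im| := by rw [him]
      _ ≤ ‖((b : ℂ) + 2 * a * Complex.I) ^ 2 + (s : ℂ)‖ := Complex.abs_im_le_norm _
  -- conclude : c * ‖u‖ ≤ ‖T u‖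
  have h2 : (0:ℝ) < (2 : ENNReal).toReal := by norm_num
  have hnorm : c * ‖u‖ ≤ ‖T u‖ := by
    have hcu : c * ‖u‖ = ‖c • u‖ := by
      rw [norm_smul]
      simp [abs_of_pos hcpos]
    rw [hcu]
    rw [← Real.rpow_le_rpow_iff (norm_nonneg _) (norm_nonneg _) h2]
    rw [lp.norm_rpow_eq_tsum h2, lp.norm_rpow_eq_tsum h2]
    refine Summable.tsum_le_tsum ?_ ?_ ?_
    · intro γ
      refine Real.rpow_le_rpow (norm_nonneg _) ?_ (by norm_num)
      have : ‖(c • u) γ‖ = c * ‖u γ‖ := by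
        rw [lp.coeFn_smul]
        simp [norm_smul, abs_of_pos hcpos]
      rw [this]
      exact key γ
    · exact (lp.memℓp (c • u)).summable h2
    · exact (lp.memℓp (T u)).summable h2
  by_contra hne
  have hupos : 0 < ‖u‖ := by
    rw [norm_pos_iff]
    exact hne
  have : ‖T u‖ ≤ ‖T‖ * ‖u‖ := T.le_opNorm u
  nlinarith
end

section
/- (Dimension count in the classical Liouville theorem.) Let n ≥ 1 and N ∈ ℕ. Consider the ℝ-vector space H of all polynomials p ∈ ℝ[x₁,…,x_n] with total degree ≤ N that are harmonic, i.e. Σ_{i=1}^{n} ∂²p/∂x_i² = 0 (with the derivatives taken as formal partial derivatives of polynomials). Then H is finite-dimensional of dimension C(n+N, N) − C(n+N−2, n), where C(·,·) is the binomial coefficient (for N ≥ 2 this equals C(n+N, N) − C(n+N−2, N−2)). -/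
open MvPolynomial

namespace LiouvilleDimAux

variable {n : ℕ}

/-- weight of a monomial: product of factorials of exponents. -/
noncomputable def w (m : Fin n →₀ ℕ) : ℝ := ∏ j, ((m j).factorial : ℝ)

lemma w_pos (m : Fin n →₀ ℕ) : 0 < w m :=
  Finset.prod_pos fun j _ => by exact_mod_cast (m j).factorial_pos

lemma w_add_single (m : Fin n →₀ ℕ) (i : Fin n) :
    w (m + Finsupp.single i 1) = ((m i : ℝ) + 1) * w m := by
  classical
  have h1 : ∀ g : Fin n →₀ ℕ, w g
      = ((g i).factorial : ℝ) * ∏ j ∈ Finset.univ.erase i, ((g j).factorial : ℝ) :=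
    fun g => (Finset.mul_prod_erase Finset.univ (fun j => ((g j).factorial : ℝ))
      (Finset.mem_univ i)).symm
  rw [h1, h1]
  have h2 : ∏ j ∈ Finset.univ.erase i, ((((m + Finsupp.single i 1 : Fin n →₀ ℕ)) j).factorial : ℝ)
      = ∏ j ∈ Finset.univ.erase i, ((m j).factorial : ℝ) := by
    refine Finset.prod_congr rfl fun j hj => ?_
    rw [Finsupp.add_apply, Finsupp.single_apply,
      if_neg (Ne.symm (Finset.ne_of_mem_erase hj)), add_zero]
  rw [h2]
  have h3 : ((m + Finsupp.single i 1 : Fin n →₀ ℕ)) i = m i + 1 := by simp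
  rw [h3, Nat.factorial_succ]
  push_cast
  ring

/-- The apolar pairing. -/
noncomputable def B (p q : MvPolynomial (Fin n) ℝ) : ℝ :=
  ∑ m ∈ p.support ∩ q.support, coeff m p * coeff m q * w m

lemma B_eq_sum {p q : MvPolynomial (Fin n) ℝ} {u : Finset (Fin n →₀ ℕ)}
    (h : p.support ∩ q.support ⊆ u) :
    B p q = ∑ m ∈ u, coeff m p * coeff m q * w m := by
  refine Finset.sum_subset h fun m _ hm => ?_
  by_cases h' : m ∈ p.support
  · rw [notMem_support_iff.mp (fun hq => hm (Finset.mem_inter.mpr ⟨h', hq⟩)), mul_zero, zero_mul]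
  · rw [notMem_support_iff.mp h', zero_mul, zero_mul]

lemma B_zero_left (q : MvPolynomial (Fin n) ℝ) : B 0 q = 0 := by
  simp [B]

lemma B_zero_right (p : MvPolynomial (Fin n) ℝ) : B p 0 = 0 := by
  simp [B]

lemma B_add_left (p p' q : MvPolynomial (Fin n) ℝ) :
    B (p + p') q = B p q + B p' q := by
  classical
  rw [B_eq_sum (u := p.support ∪ p'.support)
      (Finset.inter_subset_left.trans support_add),
      B_eq_sum (u := p.support ∪ p'.support)
      (Finset.inter_subset_left.trans Finset.subset_union_left),
      B_eq_sum (u := p.support ∪ p'.support)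
      (Finset.inter_subset_left.trans Finset.subset_union_right),
      ← Finset.sum_add_distrib]
  exact Finset.sum_congr rfl fun m _ => by rw [coeff_add]; ring

lemma B_add_right (p q q' : MvPolynomial (Fin n) ℝ) :
    B p (q + q') = B p q + B p q' := by
  classical
  rw [B_eq_sum (u := q.support ∪ q'.support)
      (Finset.inter_subset_right.trans support_add),
      B_eq_sum (u := q.support ∪ q'.support)
      (Finset.inter_subset_right.trans Finset.subset_union_left),
      B_eq_sum (u := q.support ∪ q'.support)
      (Finset.inter_subset_right.trans Finset.subset_union_right),
      ← Finset.sum_add_distrib]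
  exact Finset.sum_congr rfl fun m _ => by rw [coeff_add]; ring

lemma B_sum_left {ι : Type*} (s : Finset ι) (f : ι → MvPolynomial (Fin n) ℝ)
    (q : MvPolynomial (Fin n) ℝ) :
    B (∑ i ∈ s, f i) q = ∑ i ∈ s, B (f i) q := by
  classical
  induction s using Finset.induction_on with
  | empty => simp [B_zero_left]
  | insert x s hx ih =>
    rw [Finset.sum_insert hx, Finset.sum_insert hx, B_add_left, ih]

lemma B_sum_right {ι : Type*} (s : Finset ι) (p : MvPolynomial (Fin n) ℝ)
    (f : ι → MvPolynomial (Fin n) ℝ) :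
    B p (∑ i ∈ s, f i) = ∑ i ∈ s, B p (f i) := by
  classical
  induction s using Finset.induction_on with
  | empty => simp [B_zero_right]
  | insert x s hx ih =>
    rw [Finset.sum_insert hx, Finset.sum_insert hx, B_add_right, ih]

lemma B_monomial (a b : Fin n →₀ ℕ) (c d : ℝ) :
    B (monomial a c) (monomial b d) = if a = b then c * d * w a else 0 := by
  classical
  rw [B_eq_sum (u := ({a, b} : Finset (Fin n →₀ ℕ)))
    ((Finset.inter_subset_left.trans support_monomial_subset).trans
      (by intro x hx; simp_all))]
  by_cases h : a = b
  · subst h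
    simp [coeff_monomial]
  · rw [Finset.sum_insert (by simpa using h), Finset.sum_singleton,
      coeff_monomial, coeff_monomial, coeff_monomial, coeff_monomial,
      if_neg (Ne.symm h), if_neg h, if_neg h]
    simp

lemma B_pderiv (i : Fin n) (p q : MvPolynomial (Fin n) ℝ) :
    B (pderiv i p) q = B p (X i * q) := by
  induction p using MvPolynomial.induction_on' with
  | add p p' hp hp' => rw [map_add, B_add_left, B_add_left, hp, hp']
  | monomial m c =>
    induction q using MvPolynomial.induction_on' with
    | add q q' hq hq' => rw [mul_add, B_add_right, B_add_right, hq, hq']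
    | monomial m' c' =>
      rw [pderiv_monomial, X, monomial_mul, one_mul, B_monomial, B_monomial]
      by_cases h : m i = 0
      · have hc : m ≠ Finsupp.single i 1 + m' := by
          intro he
          rw [he] at h
          simp at h
        rw [if_neg hc]
        simp [h]
      · have hle : Finsupp.single i 1 ≤ m :=
          Finsupp.single_le_iff.mpr (Nat.one_le_iff_ne_zero.mpr h)
        by_cases hc : m = Finsupp.single i 1 + m'
        · have h1 : m - Finsupp.single i 1 = m' := by
            rw [hc]; exact add_tsub_cancel_left _ _
          rw [if_pos h1, if_pos hc, h1]
          have h2 : m i = m' i + 1 := by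
            rw [hc, Finsupp.add_apply, Finsupp.single_eq_same]
            omega
          have h3 : w m = ((m' i : ℝ) + 1) * w m' := by
            rw [hc, add_comm (Finsupp.single i 1) m', w_add_single]
          rw [h2, h3]
          push_cast
          ring
        · rw [if_neg, if_neg hc]
          intro h1
          refine hc ?_
          rw [← h1]
          exact (tsub_add_cancel_of_le hle).symm.trans (add_comm _ _)

lemma eq_zero_of_B_self (p : MvPolynomial (Fin n) ℝ) (h : B p p = 0) : p = 0 := by
  classical
  rw [B, Finset.inter_self] at h
  have hnn : ∀ m ∈ p.support, 0 ≤ coeff m p * coeff m p * w m := fun m _ =>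
    mul_nonneg (mul_self_nonneg _) (w_pos m).le
  have h2 := (Finset.sum_eq_zero_iff_of_nonneg hnn).mp h
  rw [← support_eq_empty, Finset.eq_empty_iff_forall_notMem]
  intro m hm
  have h3 := h2 m hm
  rcases mul_eq_zero.mp h3 with h' | h'
  · exact mem_support_iff.mp hm (mul_self_eq_zero.mp h')
  · exact absurd h' (ne_of_gt (w_pos m))

/-- sum of squares of the variables -/
noncomputable def r2 (n : ℕ) : MvPolynomial (Fin n) ℝ := ∑ i : Fin n, X i ^ 2

lemma r2_ne_zero (hn : 1 ≤ n) : r2 n ≠ 0 := by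
  intro h
  have := congrArg (eval (fun _ : Fin n => (1 : ℝ))) h
  rw [r2] at this
  simp at this
  omega

lemma totalDegree_r2_le : (r2 n).totalDegree ≤ 2 := by
  refine totalDegree_finsetSum_le fun i _ => ?_
  exact le_of_eq (totalDegree_X_pow i 2)

/-- The Laplacian as a linear map. -/
noncomputable def lapL (n : ℕ) :
    MvPolynomial (Fin n) ℝ →ₗ[ℝ] MvPolynomial (Fin n) ℝ where
  toFun p := ∑ i : Fin n, pderiv i (pderiv i p)
  map_add' p q := by simp [Finset.sum_add_distrib]
  map_smul' c p := by simp [Finset.smul_sum]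

lemma lapL_apply (p : MvPolynomial (Fin n) ℝ) :
    lapL n p = ∑ i : Fin n, pderiv i (pderiv i p) := rfl

lemma B_lapL (p q : MvPolynomial (Fin n) ℝ) :
    B (lapL n p) q = B p (r2 n * q) := by
  rw [lapL_apply, B_sum_left, r2, Finset.sum_mul, B_sum_right]
  refine Finset.sum_congr rfl fun i _ => ?_
  rw [B_pderiv, B_pderiv, ← mul_assoc, ← sq]

lemma totalDegree_pderiv_le (i : Fin n) (p : MvPolynomial (Fin n) ℝ) (d : ℕ)
    (h : p.totalDegree ≤ d + 1) : (pderiv i p).totalDegree ≤ d := by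
  conv_lhs => rw [p.as_sum]
  rw [map_sum]
  refine totalDegree_finsetSum_le fun m hm => ?_
  rw [pderiv_monomial]
  by_cases hmi : m i = 0
  · simp [hmi]
  · refine (totalDegree_monomial_le _ _).trans ?_
    have hle : Finsupp.single i 1 ≤ m :=
      Finsupp.single_le_iff.mpr (Nat.one_le_iff_ne_zero.mpr hmi)
    have hsum : ((m - Finsupp.single i 1).sum fun _ e => e) + 1
        = m.sum fun _ e => e := by
      conv_rhs => rw [← tsub_add_cancel_of_le hle]
      rw [Finsupp.sum_add_index' (fun _ => rfl) (fun _ _ _ => rfl),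
        Finsupp.sum_single_index rfl]
    have hms : (m.sum fun _ e => e) ≤ d + 1 := (le_totalDegree hm).trans h
    show ((m - Finsupp.single i 1).sum fun _ e => e) ≤ d
    omega

lemma pderiv_eq_zero_of_totalDegree_eq_zero (i : Fin n) (p : MvPolynomial (Fin n) ℝ)
    (h : p.totalDegree = 0) : pderiv i p = 0 := by
  conv_lhs => rw [p.as_sum]
  rw [map_sum]
  refine Finset.sum_eq_zero fun m hm => ?_
  rw [pderiv_monomial, (totalDegree_eq_zero_iff (Fin n) p).mp h m hm i]
  simp

lemma totalDegree_lapL_le (p : MvPolynomial (Fin n) ℝ) (d : ℕ)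
    (h : p.totalDegree ≤ d + 2) : (lapL n p).totalDegree ≤ d := by
  rw [lapL_apply]
  refine totalDegree_finsetSum_le fun i _ => ?_
  exact totalDegree_pderiv_le i _ d (totalDegree_pderiv_le i p (d + 1) h)

lemma lapL_eq_zero_of_totalDegree_le_one (p : MvPolynomial (Fin n) ℝ)
    (h : p.totalDegree ≤ 1) : lapL n p = 0 := by
  rw [lapL_apply]
  refine Finset.sum_eq_zero fun i _ => ?_
  rw [pderiv_eq_zero_of_totalDegree_eq_zero i _
    (Nat.le_zero.mp (totalDegree_pderiv_le i p 0 h))]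

/-- slack-variable equivalence. -/
def slackEquiv (n d : ℕ) :
    {f : Fin n → ℕ // ∑ j, f j ≤ d} ≃ {f : Fin (n + 1) → ℕ // ∑ j, f j = d} where
  toFun f := ⟨Fin.cons (d - ∑ j, f.1 j) f.1, by
    rw [Fin.sum_cons]
    have := f.2
    omega⟩
  invFun g := ⟨Fin.tail g.1, by
    have := g.2
    rw [Fin.sum_univ_succ] at this
    have h : ∑ j : Fin n, Fin.tail g.1 j = ∑ j : Fin n, g.1 j.succ := rfl
    omega⟩
  left_inv f := by
    ext j
    simp [Fin.tail_cons]
  right_inv g := by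
    ext j
    refine Fin.cases ?_ ?_ j
    · have := g.2
      rw [Fin.sum_univ_succ] at this
      have h : ∑ j : Fin n, Fin.tail g.1 j = ∑ j : Fin n, g.1 j.succ := rfl
      simp only [Fin.cons_zero]
      rw [show (∑ j : Fin n, Fin.tail g.1 j) = ∑ j : Fin n, g.1 j.succ from rfl]
      omega
    · intro k
      simp [Fin.tail]

lemma finrank_restrictTotalDegree (n d : ℕ) :
    Module.finrank ℝ (restrictTotalDegree (Fin n) ℝ d) = (n + d).choose d := by
  classical
  have e1 : {m : Fin n →₀ ℕ // (m.sum fun _ e => e) ≤ d}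
      ≃ {f : Fin n → ℕ // ∑ j, f j ≤ d} :=
    Finsupp.equivFunOnFinite.subtypeEquiv (fun m => by
      rw [Finsupp.sum_fintype _ _ (fun _ => rfl)]
      rfl)
  have e2 : {m : Fin n →₀ ℕ // (m.sum fun _ e => e) ≤ d} ≃ Sym (Fin (n + 1)) d :=
    (e1.trans (slackEquiv n d)).trans (Sym.equivNatSumOfFintype (Fin (n + 1)) d).symm
  haveI : Fintype ({m : Fin n →₀ ℕ | (m.sum fun _ e => e) ≤ d} : Set (Fin n →₀ ℕ)) :=
    Fintype.ofEquiv _ e2.symm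
  have hcard : Fintype.card ({m : Fin n →₀ ℕ | (m.sum fun _ e => e) ≤ d} : Set (Fin n →₀ ℕ))
      = Fintype.card (Sym (Fin (n + 1)) d) := Fintype.card_congr e2
  show Module.finrank ℝ
    (restrictSupport ℝ {m : Fin n →₀ ℕ | (m.sum fun _ e => e) ≤ d}) = (n + d).choose d
  rw [Module.finrank_eq_card_basis
    (basisRestrictSupport ℝ {m : Fin n →₀ ℕ | (m.sum fun _ e => e) ≤ d})]
  rw [hcard, Sym.card_sym_eq_choose]
  simp only [Fintype.card_fin]
  congr 1
  omega

end LiouvilleDimAux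

open LiouvilleDimAux

set_option maxHeartbeats 1000000 in
set_option synthInstance.maxHeartbeats 400000 in
/-- Dimension count in the classical Liouville theorem: the space of harmonic
polynomials in `n` variables of total degree at most `N` is finite-dimensional
of dimension `C(n+N, N) − C(n+N−2, n)`. -/
theorem dim_harmonic_polynomials (n : ℕ) (hn : 1 ≤ n) (N : ℕ)
    (H : Submodule ℝ (MvPolynomial (Fin n) ℝ))
    (hH : ∀ p : MvPolynomial (Fin n) ℝ,
      p ∈ H ↔ (p.totalDegree ≤ N ∧
        ∑ i : Fin n, pderiv i (pderiv i p) = 0)) :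
    FiniteDimensional ℝ H ∧
      Module.finrank ℝ H = (n + N).choose N - (n + N - 2).choose n := by
  classical
  rcases le_or_gt N 1 with hN | hN
  · -- low degree case: everything is harmonic
    have hHeq : H = restrictTotalDegree (Fin n) ℝ N := by
      ext p
      rw [hH, mem_restrictTotalDegree]
      constructor
      · exact fun h => h.1
      · intro h
        refine ⟨h, ?_⟩
        have := lapL_eq_zero_of_totalDegree_le_one p (h.trans hN)
        rwa [lapL_apply] at this
    rw [hHeq]
    refine ⟨inferInstance, ?_⟩
    have h0 : (n + N - 2).choose n = 0 := Nat.choose_eq_zero_of_lt (by omega)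
    rw [finrank_restrictTotalDegree, h0, Nat.sub_zero]
  · -- N = M + 2
    obtain ⟨M, rfl⟩ : ∃ M, N = M + 2 := ⟨N - 2, by omega⟩
    set VN := restrictTotalDegree (Fin n) ℝ (M + 2) with hVN
    set VM := restrictTotalDegree (Fin n) ℝ M with hVM
    have hlapmem : ∀ p ∈ VN, lapL n p ∈ VM := by
      intro p hp
      rw [hVM, mem_restrictTotalDegree]
      exact totalDegree_lapL_le p M ((mem_restrictTotalDegree _ _ _).mp hp)
    set L : VN →ₗ[ℝ] VM := (lapL n).restrict hlapmem with hL
    have hmulmem : ∀ q ∈ VM, (LinearMap.mulLeft ℝ (r2 n)) q ∈ VN := by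
      intro q hq
      rw [hVN, mem_restrictTotalDegree, LinearMap.mulLeft_apply]
      refine (totalDegree_mul _ _).trans ?_
      have h1 : (r2 n).totalDegree ≤ 2 := totalDegree_r2_le
      have h2 : q.totalDegree ≤ M := (mem_restrictTotalDegree _ _ _).mp hq
      omega
    set Mr : VM →ₗ[ℝ] VN := (LinearMap.mulLeft ℝ (r2 n)).restrict hmulmem with hMr
    set T : VM →ₗ[ℝ] VM := L ∘ₗ Mr with hT
    have hTinj : Function.Injective T := by
      rw [← LinearMap.ker_eq_bot]
      rw [LinearMap.ker_eq_bot']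
      intro q hq
      have h1 : lapL n (r2 n * (q : MvPolynomial (Fin n) ℝ)) = 0 := by
        have h : ((T q : VM) : MvPolynomial (Fin n) ℝ) = 0 := by rw [hq]; rfl
        rw [hT, LinearMap.comp_apply, hL, LinearMap.restrict_coe_apply, hMr,
          LinearMap.restrict_coe_apply, LinearMap.mulLeft_apply] at h
        exact h
      have h2 : B (r2 n * (q : MvPolynomial (Fin n) ℝ)) (r2 n * q) = 0 := by
        rw [← B_lapL, h1, B_zero_left]
      have h3 := eq_zero_of_B_self _ h2
      have h4 : (q : MvPolynomial (Fin n) ℝ) = 0 := by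
        rcases mul_eq_zero.mp h3 with h' | h'
        · exact absurd h' (r2_ne_zero hn)
        · exact h'
      exact Subtype.ext h4
    have hTsurj : Function.Surjective T := LinearMap.injective_iff_surjective.mp hTinj
    have hLsurj : Function.Surjective L := by
      have : Function.Surjective (⇑L ∘ ⇑Mr) := by rwa [← LinearMap.coe_comp]
      exact this.of_comp
    -- identify H with the kernel of L
    have hHle : H ≤ VN := fun p hp =>
      (mem_restrictTotalDegree _ _ _).mpr ((hH p).mp hp).1
    have hker : Submodule.comap VN.subtype H = LinearMap.ker L := by
      ext x
      rw [Submodule.mem_comap, LinearMap.mem_ker, Submodule.coe_subtype, hH,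
        ← Submodule.coe_eq_zero, hL, LinearMap.restrict_coe_apply, lapL_apply]
      exact ⟨fun h => h.2, fun h => ⟨(mem_restrictTotalDegree _ _ _).mp x.2, h⟩⟩
    have e : (LinearMap.ker L) ≃ₗ[ℝ] H := hker ▸ Submodule.comapSubtypeEquivOfLe hHle
    have hfd : FiniteDimensional ℝ H := Module.Finite.equiv e
    refine ⟨hfd, ?_⟩
    have hrn := LinearMap.finrank_range_add_finrank_ker L
    rw [LinearMap.range_eq_top.mpr hLsurj, finrank_top] at hrn
    have hVNr : Module.finrank ℝ VN = (n + (M + 2)).choose (M + 2) :=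
      finrank_restrictTotalDegree n (M + 2)
    have hVMr : Module.finrank ℝ VM = (n + M).choose M :=
      finrank_restrictTotalDegree n M
    have hHr : Module.finrank ℝ H = Module.finrank ℝ (LinearMap.ker L) :=
      e.symm.finrank_eq
    have hsymm : (n + M).choose M = (n + M).choose n := by
      rw [← Nat.choose_symm_add, Nat.add_comm]
    have hle2 : (n + M).choose M ≤ (n + (M + 2)).choose (M + 2) := by
      omega
    rw [hHr]
    have hsub : n + (M + 2) - 2 = n + M := by omega
    rw [hsub, ← hsymm]
    omega
end

section
/- (Plancherel theorem for the Floquet transform.) Let n ≥ 1 and let f : ℝⁿ → ℂ be continuous with compact support. Define the Floquet transform (Uf)(x,k) = Σ_{γ ∈ ℤⁿ} f(x − γ)·e^{i k·γ} for x ∈ ℝⁿ and k ∈ ℝⁿ (the sum is finite for each x). Then (2π)^{−n} ∫_{k ∈ [−π,π]ⁿ} ∫_{x ∈ [0,1]ⁿ} |(Uf)(x,k)|² dx dk = ∫_{ℝⁿ} |f(x)|² dx. That is, the Floquet transform is an isometry from L²(ℝⁿ) into L²(𝕋*, L²(W)), where W = [0,1]ⁿ is the fundamental domain of the lattice ℤⁿ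 and 𝕋* = [−π,π]ⁿ is the Brillouin zone with normalized measure (2π)^{−n}dk. -/
open Real MeasureTheory

section FloquetAux

open Complex in
private lemma floquet_int1d (m : ℤ) :
    ∫ t in Set.Icc (-π) π, Complex.exp (Complex.I * m * t) =
      if m = 0 then (2 * π : ℂ) else 0 := by
  rw [MeasureTheory.integral_Icc_eq_integral_Ioc,
    ← intervalIntegral.integral_of_le (by linarith [pi_pos] : -π ≤ π)]
  by_cases hm : m = 0
  · simp [hm]
    norm_num
    push_cast
    ring
  · simp only [hm, if_false]
    have hc : (Complex.I * m : ℂ) ≠ 0 := by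
      simp [Complex.I_ne_zero, hm]
    have := integral_exp_mul_complex (a := -π) (b := π) hc
    simp only [mul_assoc] at this ⊢
    rw [this]
    have h1 : Complex.exp (Complex.I * (m * π)) = (-1 : ℂ) ^ m := by
      rw [show (Complex.I * (m * π) : ℂ) = m * (π * Complex.I) by push_cast; ring,
        Complex.exp_int_mul, Complex.exp_pi_mul_I]
    have h2 : Complex.exp (Complex.I * (m * ((-π : ℝ) : ℂ))) = ((-1 : ℂ) ^ m)⁻¹ := by
      rw [show (Complex.I * (m * ((-π : ℝ) : ℂ)) : ℂ) = -(Complex.I * (m * π)) by push_cast; ring,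
        Complex.exp_neg, h1]
    rw [h1, h2]
    have h3 : ((-1 : ℂ) ^ m)⁻¹ = (-1 : ℂ) ^ m := by
      refine inv_eq_of_mul_eq_one_left ?_
      rw [← zpow_add₀ (by norm_num : (-1:ℂ) ≠ 0)]
      rw [← two_mul, zpow_mul]; norm_num
    rw [h3, sub_self, zero_div]

open Complex in
private lemma floquet_intnd (n : ℕ) (m : Fin n → ℤ) :
    ∫ k in (Set.univ.pi fun _ : Fin n => Set.Icc (-π) π),
      Complex.exp (Complex.I * ∑ j, (k j : ℂ) * (m j : ℂ)) =
        if m = 0 then ((2 * π : ℝ) : ℂ) ^ n else 0 := by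
  have hKm : MeasurableSet (Set.univ.pi fun _ : Fin n => Set.Icc (-π) π) :=
    MeasurableSet.univ_pi fun _ => measurableSet_Icc
  have hexp : ∀ k : Fin n → ℝ,
      Complex.exp (Complex.I * ∑ j, (k j : ℂ) * (m j : ℂ)) =
        ∏ j, Complex.exp (Complex.I * (m j) * (k j)) := by
    intro k
    rw [← Complex.exp_sum]
    congr 1
    rw [Finset.mul_sum]
    exact Finset.sum_congr rfl fun j _ => by ring
  simp_rw [hexp]
  rw [← integral_indicator hKm]
  have hind : (Set.univ.pi fun _ : Fin n => Set.Icc (-π) π).indicator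
      (fun k : Fin n → ℝ => ∏ j, Complex.exp (Complex.I * (m j) * (k j)))
      = fun k => ∏ j, (Set.Icc (-π) π).indicator
          (fun t : ℝ => Complex.exp (Complex.I * (m j) * t)) (k j) := by
    funext k
    by_cases hk : k ∈ Set.univ.pi fun _ : Fin n => Set.Icc (-π) π
    · rw [Set.indicator_of_mem hk]
      refine Finset.prod_congr rfl fun j _ => ?_
      rw [Set.indicator_of_mem (hk j (Set.mem_univ j))]
    · rw [Set.indicator_of_notMem hk]
      rw [Set.mem_univ_pi] at hk
      push_neg at hk
      obtain ⟨j, hj⟩ := hk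
      exact (Finset.prod_eq_zero (Finset.mem_univ j)
        (by rw [Set.indicator_of_notMem hj])).symm
  rw [hind, MeasureTheory.integral_fintype_prod_volume_eq_prod
    (f := fun (j : Fin n) => (Set.Icc (-π) π).indicator
      (fun t : ℝ => Complex.exp (Complex.I * (m j) * t)))]
  have : ∀ j : Fin n, ∫ t, (Set.Icc (-π) π).indicator
      (fun t : ℝ => Complex.exp (Complex.I * (m j) * t)) t
      = if m j = 0 then (2 * π : ℂ) else 0 := by
    intro j
    rw [integral_indicator measurableSet_Icc]
    exact floquet_int1d (m j)
  simp_rw [this]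
  by_cases hm : m = 0
  · simp [hm, Complex.ofReal_mul]
  · obtain ⟨j, hj⟩ := Function.ne_iff.mp hm
    rw [if_neg hm]
    have hj' : m j ≠ 0 := by simpa using hj
    exact Finset.prod_eq_zero (Finset.mem_univ j) (if_neg hj')

private lemma floquet_coe_lattice (n : ℕ) (γ : Fin n → ℤ) :
    ((((Pi.basisFun ℝ (Fin n)).restrictScalars ℤ).equivFun.symm γ :
      Submodule.span ℤ (Set.range (Pi.basisFun ℝ (Fin n)))) : Fin n → ℝ)
      = fun j => (γ j : ℝ) := by
  funext j
  rw [Module.Basis.equivFun_symm_apply]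
  push_cast
  simp [Finset.sum_apply, Pi.basisFun_apply, Pi.single_apply]

lemma floquet_tiling (n : ℕ) (g : (Fin n → ℝ) → ℂ) (hg : Continuous g)
    (hgs : HasCompactSupport g) :
    ∑' γ : Fin n → ℤ, ∫ x in (Set.univ.pi fun _ : Fin n => Set.Icc (0:ℝ) 1),
        g (x - fun j => (γ j : ℝ)) = ∫ x, g x := by
  have hint : Integrable g := hg.integrable_of_hasCompactSupport hgs
  set b := Pi.basisFun ℝ (Fin n)
  haveI : MeasurableVAdd (Submodule.span ℤ (Set.range ⇑b)) (Fin n → ℝ) := by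
    refine @MeasurableVAdd.mk _ _ _ _ _ ⟨?_⟩ ?_
    · intro c
      exact (measurable_id.const_add (c : Fin n → ℝ))
    · intro x
      exact (measurable_subtype_coe.add_const x)
  haveI : VAddInvariantMeasure (Submodule.span ℤ (Set.range ⇑b)) (Fin n → ℝ) volume :=
    ⟨fun c s _ => measure_preimage_add volume (c : Fin n → ℝ) s⟩
  have h := (ZSpan.isAddFundamentalDomain b volume).integral_eq_tsum'' g hint
  -- replace Ico fundamental domain by Icc cube
  have hae : (ZSpan.fundamentalDomain b) =ᵐ[volume]
      (Set.univ.pi fun _ : Fin n => Set.Icc (0:ℝ) 1) := by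
    rw [ZSpan.fundamentalDomain_pi_basisFun, MeasureTheory.volume_pi,
      show (Set.univ.pi fun _ : Fin n => Set.Icc (0:ℝ) 1)
        = Set.Icc (0 : Fin n → ℝ) 1 from Set.pi_univ_Icc _ _]
    exact MeasureTheory.Measure.univ_pi_Ico_ae_eq_Icc
  rw [h]
  let e : (Fin n → ℤ) ≃ Submodule.span ℤ (Set.range b) :=
    ((b.restrictScalars ℤ).equivFun.toEquiv.symm)
  let e' := (Equiv.neg (Fin n → ℤ)).trans e
  rw [← Equiv.tsum_eq e' (fun v => ∫ x in ZSpan.fundamentalDomain b, g (v +ᵥ x))]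
  refine tsum_congr fun γ => ?_
  rw [setIntegral_congr_set hae]
  refine setIntegral_congr_fun
    (MeasurableSet.univ_pi fun _ => measurableSet_Icc) fun x _ => ?_
  have hcoe : ((e' γ : Submodule.span ℤ (Set.range b)) : Fin n → ℝ)
      = fun j => (-(γ j) : ℝ) := by
    show ((e (-γ) : Submodule.span ℤ (Set.range b)) : Fin n → ℝ) = _
    rw [show e (-γ) = (b.restrictScalars ℤ).equivFun.symm (-γ) from rfl, floquet_coe_lattice]
    funext j
    simp
  have hv : e' γ +ᵥ x = x - fun j => (γ j : ℝ) := by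
    show ((e' γ : Submodule.span ℤ (Set.range b)) : Fin n → ℝ) + x = _
    rw [hcoe]
    funext j
    simp [sub_eq_add_neg, add_comm]
  rw [hv]

end FloquetAux

/-- The Floquet transform `(Uf)(x,k) = Σ_{γ ∈ ℤⁿ} f(x−γ) e^{ik·γ}`. -/
noncomputable def floquetTransform (n : ℕ) (f : (Fin n → ℝ) → ℂ)
    (x k : Fin n → ℝ) : ℂ :=
  ∑' γ : Fin n → ℤ,
    f (x - fun j => (γ j : ℝ)) * Complex.exp (Complex.I * ∑ j, (k j : ℂ) * (γ j : ℂ))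

/-- **Plancherel theorem for the Floquet transform**: for continuous compactly
supported `f : ℝⁿ → ℂ`,
`(2π)^{−n} ∫_{[−π,π]ⁿ} ∫_{[0,1]ⁿ} |(Uf)(x,k)|² dx dk = ∫_{ℝⁿ} |f|²`,
i.e. `U` is an isometry from `L²(ℝⁿ)` into `L²(𝕋*, L²(W))`. -/
theorem floquetTransform_plancherel (n : ℕ) (hn : 1 ≤ n)
    (f : (Fin n → ℝ) → ℂ) (hf : Continuous f) (hsupp : HasCompactSupport f) :
    ((2 * π) ^ n)⁻¹ *
        ∫ k in (Set.univ.pi fun _ : Fin n => Set.Icc (-π) π),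
          ∫ x in (Set.univ.pi fun _ : Fin n => Set.Icc (0 : ℝ) 1),
            ‖floquetTransform n f x k‖ ^ 2
      = ∫ x : Fin n → ℝ, ‖f x‖ ^ 2 := by
  set W : Set (Fin n → ℝ) := Set.univ.pi fun _ : Fin n => Set.Icc (0:ℝ) 1 with hWdef
  set K : Set (Fin n → ℝ) := Set.univ.pi fun _ : Fin n => Set.Icc (-π) π with hKdef
  have hWm : MeasurableSet W := MeasurableSet.univ_pi fun _ => measurableSet_Icc
  have hKm : MeasurableSet K := MeasurableSet.univ_pi fun _ => measurableSet_Icc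
  have hWc : IsCompact W := isCompact_univ_pi fun _ => isCompact_Icc
  have hKc : IsCompact K := isCompact_univ_pi fun _ => isCompact_Icc
  -- support bound
  obtain ⟨R, hR⟩ := hsupp.isBounded.subset_closedBall 0
  set M : ℤ := ⌈R⌉ + 1 with hM
  set S : Finset (Fin n → ℤ) := Finset.Icc (fun _ => -M) (fun _ => M) with hS
  set c : (Fin n → ℤ) → (Fin n → ℝ) → ℂ := fun γ x => f (x - fun j => (γ j:ℝ)) with hc
  set E : (Fin n → ℤ) → (Fin n → ℝ) → ℂ :=
    fun γ k => Complex.exp (Complex.I * ∑ j, (k j:ℂ) * (γ j:ℂ)) with hE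
  have hSmem : ∀ x ∈ W, ∀ γ : Fin n → ℤ, γ ∉ S → c γ x = 0 := by
    intro x hx γ hγ
    by_contra hne
    apply hγ
    have hmem : (x - fun j => (γ j:ℝ)) ∈ Metric.closedBall (0 : Fin n → ℝ) R :=
      hR (subset_tsupport f hne)
    rw [Metric.mem_closedBall, dist_zero_right] at hmem
    have hRM : R + 1 ≤ (M : ℝ) := by
      rw [hM]; push_cast; linarith [Int.le_ceil R]
    rw [hS, Finset.mem_Icc]
    constructor <;> (rw [Pi.le_def]; intro j) <;>
    · have h1 : |x j - (γ j : ℝ)| ≤ R := by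
        calc |x j - (γ j : ℝ)| = ‖(x - fun j => (γ j : ℝ)) j‖ := by simp [Real.norm_eq_abs]
        _ ≤ ‖x - fun j => (γ j : ℝ)‖ := norm_le_pi_norm _ j
        _ ≤ R := hmem
      have hx0 : (0:ℝ) ≤ x j := (hx j (Set.mem_univ j)).1
      have hx1 : x j ≤ 1 := (hx j (Set.mem_univ j)).2
      rw [abs_le] at h1
      have : -(M:ℝ) ≤ (γ j : ℝ) ∧ (γ j : ℝ) ≤ (M:ℝ) := by constructor <;> linarith
      first
        | exact_mod_cast this.1
        | exact_mod_cast this.2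
  have hfloq : ∀ x ∈ W, ∀ k, floquetTransform n f x k = ∑ γ ∈ S, c γ x * E γ k := by
    intro x hx k
    refine tsum_eq_sum fun γ hγ => ?_
    rw [show f (x - fun j => (γ j:ℝ)) = c γ x from rfl, hSmem x hx γ hγ, zero_mul]
  have hc_cont : ∀ γ, Continuous (c γ) := fun γ => hf.comp (continuous_id.sub continuous_const)
  have hE_cont : ∀ γ, Continuous (E γ) := by
    intro γ
    refine Complex.continuous_exp.comp (continuous_const.mul ?_)
    exact continuous_finset_sum _ fun j _ =>
      (Complex.continuous_ofReal.comp (continuous_apply j)).mul continuous_const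
  set A : (Fin n → ℤ) → (Fin n → ℤ) → ℂ :=
    fun γ γ' => ∫ x in W, c γ x * (starRingEnd ℂ) (c γ' x) with hA
  have hnormsq : ∀ z : ℂ, ((‖z‖^2 : ℝ) : ℂ) = z * (starRingEnd ℂ) z := by
    intro z
    rw [Complex.mul_conj]
    norm_cast
    rw [Complex.normSq_eq_norm_sq]
  have hg_cont : Continuous fun x => f x * (starRingEnd ℂ) (f x) :=
    hf.mul (continuous_star.comp hf)
  have hg_supp : HasCompactSupport fun x => f x * (starRingEnd ℂ) (f x) :=
    hsupp.mul_right
  -- the key complex identity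
  have key : ((∫ k in K, ∫ x in W, ‖floquetTransform n f x k‖^2 : ℝ) : ℂ)
      = ((2 * π : ℝ) : ℂ) ^ n * ∫ x : Fin n → ℝ, f x * (starRingEnd ℂ) (f x) := by
    calc ((∫ k in K, ∫ x in W, ‖floquetTransform n f x k‖^2 : ℝ) : ℂ)
        = ∫ k in K, ((∫ x in W, ‖floquetTransform n f x k‖^2 : ℝ) : ℂ) :=
          integral_ofReal.symm
      _ = ∫ k in K, ∑ p ∈ S ×ˢ S, A p.1 p.2 *
            (E p.1 k * (starRingEnd ℂ) (E p.2 k)) := by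
          refine setIntegral_congr_fun hKm fun k _ => ?_
          calc ((∫ x in W, ‖floquetTransform n f x k‖^2 : ℝ) : ℂ)
              = ∫ x in W, ((‖floquetTransform n f x k‖^2 : ℝ) : ℂ) := integral_ofReal.symm
            _ = ∫ x in W, ∑ p ∈ S ×ˢ S, (c p.1 x * (starRingEnd ℂ) (c p.2 x)) *
                  (E p.1 k * (starRingEnd ℂ) (E p.2 k)) := by
                refine setIntegral_congr_fun hWm fun x hx => ?_
                rw [hnormsq, hfloq x hx k, map_sum, Finset.sum_mul_sum, Finset.sum_product]
                refine Finset.sum_congr rfl fun γ _ => Finset.sum_congr rfl fun γ' _ => ?_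
                rw [map_mul]; ring
            _ = ∑ p ∈ S ×ˢ S, ∫ x in W, (c p.1 x * (starRingEnd ℂ) (c p.2 x)) *
                  (E p.1 k * (starRingEnd ℂ) (E p.2 k)) :=
                integral_finset_sum _ fun p _ =>
                  (((hc_cont p.1).mul (continuous_star.comp (hc_cont p.2))).mul
                    continuous_const).continuousOn.integrableOn_compact hWc
            _ = ∑ p ∈ S ×ˢ S, A p.1 p.2 * (E p.1 k * (starRingEnd ℂ) (E p.2 k)) :=
                Finset.sum_congr rfl fun p _ => integral_mul_const _ _
      _ = ∑ p ∈ S ×ˢ S, A p.1 p.2 * ∫ k in K, E p.1 k * (starRingEnd ℂ) (E p.2 k) := by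
          rw [integral_finset_sum _ (fun p _ => ?_)]
          · exact Finset.sum_congr rfl fun p _ => integral_const_mul _ _
          · exact (continuous_const.mul ((hE_cont p.1).mul
              (continuous_star.comp (hE_cont p.2)))).continuousOn.integrableOn_compact hKc
      _ = ∑ p ∈ S ×ˢ S, A p.1 p.2 *
            (if p.1 = p.2 then ((2 * π : ℝ) : ℂ) ^ n else 0) := by
          refine Finset.sum_congr rfl fun p _ => ?_
          congr 1
          have hEE : ∀ k : Fin n → ℝ, E p.1 k * (starRingEnd ℂ) (E p.2 k)
              = Complex.exp (Complex.I * ∑ j, (k j : ℂ) * (((p.1 - p.2) j : ℤ) : ℂ)) := by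
            intro k
            rw [hE]
            simp only
            rw [← Complex.exp_conj, ← Complex.exp_add]
            congr 1
            simp only [map_mul, map_sum, Complex.conj_I, Complex.conj_ofReal, map_intCast]
            rw [Finset.mul_sum, Finset.mul_sum, Finset.mul_sum, ← Finset.sum_add_distrib]
            refine Finset.sum_congr rfl fun j _ => ?_
            have : ((p.1 - p.2) j : ℂ) = (p.1 j : ℂ) - (p.2 j : ℂ) := by push_cast; simp
            rw [this]; ring
          simp_rw [hEE]
          rw [floquet_intnd n (p.1 - p.2)]
          simp [sub_eq_zero]
      _ = ((2 * π : ℝ) : ℂ) ^ n * ∑ γ ∈ S, A γ γ := by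
          rw [Finset.sum_product, Finset.mul_sum]
          refine Finset.sum_congr rfl fun γ hγ => ?_
          rw [Finset.sum_eq_single γ]
          · rw [if_pos rfl, mul_comm]
          · intro γ' _ hne
            rw [if_neg (Ne.symm hne), mul_zero]
          · intro h; exact absurd hγ h
      _ = ((2 * π : ℝ) : ℂ) ^ n * ∫ x : Fin n → ℝ, f x * (starRingEnd ℂ) (f x) := by
          congr 1
          rw [← floquet_tiling n _ hg_cont hg_supp]
          refine (tsum_eq_sum fun γ hγ => ?_).symm
          have hz : Set.EqOn (fun x => c γ x * (starRingEnd ℂ) (c γ x))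
              (fun _ => (0:ℂ)) W := fun x hx => by
            simp only [hSmem x hx γ hγ, zero_mul]
          calc A γ γ = ∫ x in W, (0:ℂ) := setIntegral_congr_fun hWm hz
            _ = 0 := integral_zero _ _
  -- conclude
  have hRHS : ((∫ x : Fin n → ℝ, ‖f x‖^2 : ℝ) : ℂ)
      = ∫ x : Fin n → ℝ, f x * (starRingEnd ℂ) (f x) := by
    calc ((∫ x : Fin n → ℝ, ‖f x‖^2 : ℝ) : ℂ)
        = ∫ x : Fin n → ℝ, ((‖f x‖^2 : ℝ) : ℂ) := integral_ofReal.symm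
      _ = ∫ x : Fin n → ℝ, f x * (starRingEnd ℂ) (f x) :=
        integral_congr_ae (Filter.Eventually.of_forall fun x => hnormsq (f x))
  have h2pi : ((2 * π) ^ n : ℝ) ≠ 0 := by positivity
  have hfinal : (∫ k in K, ∫ x in W, ‖floquetTransform n f x k‖^2 : ℝ)
      = (2 * π) ^ n * ∫ x : Fin n → ℝ, ‖f x‖^2 := by
    have h2 : ((2 * π : ℝ) : ℂ) ^ n * ∫ x : Fin n → ℝ, f x * (starRingEnd ℂ) (f x)
        = (((2 * π) ^ n * ∫ x : Fin n → ℝ, ‖f x‖^2 : ℝ) : ℂ) := by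
      rw [← hRHS]; norm_cast
    exact_mod_cast key.trans h2
  rw [hfinal, ← mul_assoc, inv_mul_cancel₀ h2pi, one_mul]
end

section
/- (Inversion formula for the Floquet transform.) Let n ≥ 1 and let f : ℝⁿ → ℂ be continuous with compact support. Define the Floquet transform (Uf)(x,k) = Σ_{γ ∈ ℤⁿ} f(x − γ)·e^{i k·γ} for x, k ∈ ℝⁿ. Then for every x ∈ ℝⁿ, f(x) = (2π)^{−n} ∫_{k ∈ [−π,π]ⁿ} (Uf)(x,k) dk. -/
open Real MeasureTheory

lemma exp_int_integral (m : ℤ) :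
    ∫ t in Set.Icc (-π) π, Complex.exp (Complex.I * t * m) =
      if m = 0 then (2 * π : ℂ) else 0 := by
  have hle : (-π : ℝ) ≤ π := by linarith [pi_pos]
  rw [MeasureTheory.integral_Icc_eq_integral_Ioc,
    ← intervalIntegral.integral_of_le hle]
  rcases eq_or_ne m 0 with hm | hm
  · simp [hm, two_mul]
  · have hc : (Complex.I * m) ≠ 0 := by
      simp [Complex.I_ne_zero, Complex.ext_iff, hm]
    rw [if_neg hm]
    have h1 : ∀ t : ℝ, Complex.exp (Complex.I * t * m) =
        Complex.exp ((Complex.I * m) * t) := by intro t; ring_nf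
    have h2 : Complex.exp (Complex.I * ↑m * (π:ℝ)) = Complex.exp (Complex.I * ↑m * ((-π:ℝ):ℂ)) := by
      have key : Complex.exp ((m : ℂ) * (2 * π * Complex.I)) = 1 :=
        Complex.exp_int_mul_two_pi_mul_I m
      rw [← div_eq_one_iff_eq (Complex.exp_ne_zero _), ← Complex.exp_sub]
      rw [← key]; congr 1; push_cast; ring
    simp_rw [h1]
    rw [integral_exp_mul_complex hc, h2, sub_self, zero_div]

lemma exp_pi_integral (n : ℕ) (γ : Fin n → ℤ) :
    ∫ k in (Set.univ.pi fun _ : Fin n => Set.Icc (-π) π),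
        Complex.exp (Complex.I * ∑ j, ((k j : ℂ) * (γ j : ℂ)))
      = if γ = 0 then ((2 * π : ℝ) ^ n : ℂ) else 0 := by
  have hmeas : MeasurableSet (Set.univ.pi fun _ : Fin n => Set.Icc (-π) π) :=
    MeasurableSet.univ_pi fun _ => measurableSet_Icc
  have hrw : ∀ k : Fin n → ℝ,
      Complex.exp (Complex.I * ∑ j, ((k j : ℂ) * (γ j : ℂ))) =
        ∏ j, Complex.exp (Complex.I * (k j) * (γ j)) := by
    intro k
    rw [Finset.mul_sum, Complex.exp_sum]
    congr 1; ext j; ring_nf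
  simp_rw [hrw]
  rw [← MeasureTheory.integral_indicator hmeas]
  have hind : ∀ k : Fin n → ℝ,
      (Set.univ.pi fun _ : Fin n => Set.Icc (-π) π).indicator
        (fun k => ∏ j, Complex.exp (Complex.I * (k j) * (γ j))) k =
      ∏ j, (Set.Icc (-π) π).indicator
        (fun t : ℝ => Complex.exp (Complex.I * t * (γ j))) (k j) := by
    intro k
    by_cases hk : k ∈ Set.univ.pi fun _ : Fin n => Set.Icc (-π) π
    · rw [Set.indicator_of_mem hk]
      refine Finset.prod_congr rfl fun j _ => ?_
      rw [Set.indicator_of_mem (hk j (Set.mem_univ j))]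
    · rw [Set.indicator_of_notMem hk]
      rw [Set.mem_univ_pi] at hk
      push_neg at hk
      obtain ⟨j, hj⟩ := hk
      exact (Finset.prod_eq_zero (Finset.mem_univ j)
        (by rw [Set.indicator_of_notMem hj])).symm
  simp_rw [hind]
  rw [MeasureTheory.volume_pi, MeasureTheory.integral_fintype_prod_eq_prod
    (f := fun j (t : ℝ) => (Set.Icc (-π) π).indicator
      (fun t : ℝ => Complex.exp (Complex.I * t * (γ j))) t)]
  simp_rw [MeasureTheory.integral_indicator measurableSet_Icc, exp_int_integral]
  rcases eq_or_ne γ 0 with h | h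
  · simp [h]
  · obtain ⟨j, hj⟩ := Function.ne_iff.mp h
    rw [if_neg h]
    have hj' : γ j ≠ 0 := by simpa using hj
    exact Finset.prod_eq_zero (Finset.mem_univ j) (by simp [hj'])

/-- **Inversion formula for the Floquet transform**: for continuous compactly
supported `f : ℝⁿ → ℂ` and each `x`,
`f(x) = (2π)^{−n} ∫_{[−π,π]ⁿ} (Uf)(x,k) dk`. -/
theorem floquetTransform_inversion (n : ℕ) (hn : 1 ≤ n)
    (f : (Fin n → ℝ) → ℂ) (hf : Continuous f) (hsupp : HasCompactSupport f) :
    ∀ x : Fin n → ℝ,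
      f x = ((2 * π) ^ n)⁻¹ •
        ∫ k in (Set.univ.pi fun _ : Fin n => Set.Icc (-π) π),
          floquetTransform n f x k := by
  intro x
  -- bound the support
  obtain ⟨R, hR⟩ : ∃ R, tsupport f ⊆ Metric.closedBall 0 R :=
    hsupp.isBounded.subset_closedBall 0
  -- the finite set of relevant lattice points
  set T : Set (Fin n → ℤ) :=
    Set.univ.pi fun j => Set.Icc ⌈x j - R⌉ ⌊x j + R⌋ with hT
  have hTfin : T.Finite := Set.Finite.pi fun j => Set.finite_Icc _ _
  set s : Finset (Fin n → ℤ) := insert 0 hTfin.toFinset with hs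
  have hmem : ∀ γ : Fin n → ℤ, γ ∉ s → f (x - fun j => (γ j : ℝ)) = 0 := by
    intro γ hγ
    by_contra hne
    apply hγ
    have hx : (x - fun j => (γ j : ℝ)) ∈ tsupport f := subset_tsupport f hne
    have hball := hR hx
    rw [Metric.mem_closedBall, dist_zero_right] at hball
    refine Finset.mem_insert_of_mem ?_
    rw [Set.Finite.mem_toFinset, hT, Set.mem_univ_pi]
    intro j
    have hb : |x j - (γ j : ℝ)| ≤ R := by
      have := norm_le_pi_norm (x - fun j => (γ j : ℝ)) j
      simpa [Real.norm_eq_abs] using this.trans hball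
    rw [abs_le] at hb
    constructor
    · exact Int.ceil_le.mpr (by linarith [hb.2])
    · exact Int.le_floor.mpr (by linarith [hb.1])
  have hzero : (0 : Fin n → ℤ) ∈ s := Finset.mem_insert_self _ _
  -- rewrite the tsum as a finite sum
  have hflo : ∀ k : Fin n → ℝ, floquetTransform n f x k =
      ∑ γ ∈ s, f (x - fun j => (γ j : ℝ)) *
        Complex.exp (Complex.I * ∑ j, (k j : ℂ) * (γ j : ℂ)) := by
    intro k
    exact tsum_eq_sum fun γ hγ => by rw [hmem γ hγ, zero_mul]
  simp_rw [hflo]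
  have hcomp : IsCompact (Set.univ.pi fun _ : Fin n => Set.Icc (-π) π) :=
    isCompact_univ_pi fun _ => isCompact_Icc
  have hinteg : ∀ γ : Fin n → ℤ, IntegrableOn
      (fun k : Fin n → ℝ => f (x - fun j => (γ j : ℝ)) *
        Complex.exp (Complex.I * ∑ j, (k j : ℂ) * (γ j : ℂ)))
      (Set.univ.pi fun _ : Fin n => Set.Icc (-π) π) := by
    intro γ
    have hc : Continuous (fun k : Fin n → ℝ => f (x - fun j => (γ j : ℝ)) *
        Complex.exp (Complex.I * ∑ j, (k j : ℂ) * (γ j : ℂ))) := by fun_prop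
    exact hc.continuousOn.integrableOn_compact hcomp
  rw [MeasureTheory.integral_finset_sum s fun γ _ => hinteg γ]
  have hterm : ∀ γ : Fin n → ℤ,
      ∫ k in (Set.univ.pi fun _ : Fin n => Set.Icc (-π) π),
        f (x - fun j => (γ j : ℝ)) *
          Complex.exp (Complex.I * ∑ j, (k j : ℂ) * (γ j : ℂ))
      = if γ = 0 then f x * ((2 * π : ℝ) ^ n : ℂ) else 0 := by
    intro γ
    rw [MeasureTheory.integral_const_mul, exp_pi_integral]
    have h0 : (x - fun j => (((0 : Fin n → ℤ)) j : ℝ)) = x := by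
      funext j; simp
    rcases eq_or_ne γ 0 with h | h
    · subst h; rw [h0]; simp
    · simp [h]
  simp_rw [hterm]
  rw [Finset.sum_ite_eq' s 0 (fun _ => f x * ((2 * π : ℝ) ^ n : ℂ)), if_pos hzero]
  have hne : ((2 * π : ℝ) ^ n : ℝ) ≠ 0 := by positivity
  rw [Complex.real_smul, Complex.ofReal_inv]
  have hneC : (((2 * π) ^ n : ℝ) : ℂ) ≠ 0 := Complex.ofReal_ne_zero.mpr hne
  rw [Complex.ofReal_pow] at hneC ⊢
  field_simp
end
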